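/- arXiv:2102.11253 — 9 statements merged into one kernel-verified Lean document; each statement's English description precedes it below -/
import Mathlib

section
/- Let m ≥ 1, let T_1,…,T_m ∈ ℝ be scores, and for each nonempty S ⊆ [m] set p(S) = f(|S|, (T_i)_{i∈S}) ∈ [0,1], where for each s ∈ {1,…,m} the function f(s, ·) : ℝ^s → [0,1] is invariant under permutations of its arguments and nondecreasing in each argument. Let t_α(S) = 1{p(S) ≤ α} and p̄(S) = inf{α ∈ [0,1] : t̄_α(S) = 1}. Then for every nonempty S ⊆ [m], p̄(S) = max_{0 ≤ i ≤ m−|S|} p([m] ∖ I_i), where I_0 = ∅ and, for 1 ≤ i ≤ m−|S|, I_i ⊆ [m]∖S is any set of i indices whose scores are the i smallest scores in [m]∖S (i.e. T_j ≤ T_k for all j ∈ I_i and k ∈ ([m]∖S)∖I_i). -/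
/-!
A superset `J ⊇ S` with `#J = m - i` can be matched bijectively with `[m] ∖ I_i` so that each
score of `J` is at most the score it is matched with: fix `J ∩ ([m] ∖ I_i)` and send `J ∩ I_i`
onto `([m] ∖ I_i) ∖ J ⊆ Sᶜ ∖ I_i`, whose scores dominate those in `I_i`. By symmetry and
monotonicity of `f`, `p(J) ≤ p([m] ∖ I_i)`, while `[m] ∖ I_i ⊇ S` itself. Hence
`max_{J ⊇ S} p(J) = max_i p([m] ∖ I_i)`, and as all p-values lie in `[0, 1]` this maximum is the
least admissible `α`.
-/

open Finset

theorem exists_equiv_le_of_card_eq {ι β : Type*} [Preorder β] (T : ι → β) {J B : Finset ι}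
    (hcard : #J = #B) (hT : ∀ x ∈ J, x ∉ B → ∀ y ∈ B, y ∉ J → T x ≤ T y) :
    ∃ e : J ≃ B, ∀ x : J, T x ≤ T (e x) := by
  obtain ⟨e, he⟩ := Set.MapsTo.exists_equiv_extend_of_card_eq (s := {x : J | (x : ι) ∈ B})
    (f := Subtype.val) (by simpa using hcard) (fun _ hx => hx) Subtype.val_injective.injOn
  refine ⟨e, fun x => ?_⟩
  by_cases hxB : (x : ι) ∈ B
  · rw [he x hxB]
  · -- `e` fixes `J ∩ B` pointwise, so it sends no point of `J \ B` into `J`.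
    have hexJ : (e x : ι) ∉ J := fun h => by
      have hfix : e ⟨e x, h⟩ = e x := Subtype.ext (he ⟨e x, h⟩ (e x).2)
      exact hxB (congrArg Subtype.val (e.injective hfix) ▸ (e x).2)
    exact hT x x.2 hxB (e x) (e x).2 hexJ

/-- The local p-value `p(A) = f(|A|, (T_i)_{i ∈ A})`. -/
def scoreStat {ι : Type*} [LinearOrder ι] (f : (s : ℕ) → (Fin s → ℝ) → ℝ) (T : ι → ℝ)
    (A : Finset ι) : ℝ :=
  f #A fun j => T (A.orderIsoOfFin rfl j)

section scoreStat

variable {ι : Type*} [LinearOrder ι] (f : (s : ℕ) → (Fin s → ℝ) → ℝ) (T : ι → ℝ)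

theorem scoreStat_eq_of_card_eq {A : Finset ι} {s : ℕ} (hA : #A = s) :
    scoreStat f T A = f s fun j => T (A.orderIsoOfFin hA j) := by
  subst hA
  rfl

theorem scoreStat_le_of_equiv
    (hsym : ∀ (s : ℕ) (σ : Equiv.Perm (Fin s)) (x : Fin s → ℝ), f s (x ∘ σ) = f s x)
    (hmono : ∀ (s : ℕ) (x y : Fin s → ℝ), (∀ j, x j ≤ y j) → f s x ≤ f s y)
    {A B : Finset ι} (e : A ≃ B) (he : ∀ x : A, T x ≤ T (e x)) :
    scoreStat f T A ≤ scoreStat f T B := by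
  have hcard : #B = #A := by simpa using (Fintype.card_congr e).symm
  rw [scoreStat, scoreStat_eq_of_card_eq f T hcard]
  let oA := A.orderIsoOfFin rfl
  let oB := B.orderIsoOfFin hcard
  rw [← hsym _ (oA.toEquiv.trans (e.trans oB.toEquiv.symm)) fun j => T (oB j)]
  exact hmono _ _ _ fun j => by simpa [oA, oB.apply_symm_apply] using he (oA j)

theorem scoreStat_le_univ_sdiff [Fintype ι]
    (hsym : ∀ (s : ℕ) (σ : Equiv.Perm (Fin s)) (x : Fin s → ℝ), f s (x ∘ σ) = f s x)
    (hmono : ∀ (s : ℕ) (x y : Fin s → ℝ), (∀ j, x j ≤ y j) → f s x ≤ f s y)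
    {S J K : Finset ι} (hSJ : S ⊆ J) (hcard : #J + #K = Fintype.card ι)
    (hK : ∀ j ∈ K, ∀ k ∈ Sᶜ \ K, T j ≤ T k) :
    scoreStat f T J ≤ scoreStat f T (univ \ K) := by
  obtain ⟨e, he⟩ := exists_equiv_le_of_card_eq T (J := J) (B := univ \ K)
    (by rw [card_univ_sdiff]; omega) fun x _ hxK y hyK hyJ => by
      simp only [mem_sdiff, mem_univ, true_and, not_not] at hxK hyK
      exact hK x hxK y (mem_sdiff.2 ⟨mem_compl.2 fun hyS => hyJ (hSJ hyS), hyK⟩)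
  exact scoreStat_le_of_equiv f T hsym hmono e he

end scoreStat

/-- for a symmetric monotonic local test `t_α(S) = 1{p(S) ≤ α}` with
`p(S) = f(|S|, (T_i)_{i∈S})`, the closed-testing adjusted p-value of `S` equals the
maximum of `p([m] ∖ I_i)` over `0 ≤ i ≤ m - |S|`, where `I_i` collects `i` indices
carrying the `i` smallest scores in `Sᶜ`. -/
theorem stmt_1 (m : ℕ) (T : Fin m → ℝ)
    (f : (s : ℕ) → (Fin s → ℝ) → ℝ)
    (hrange : ∀ (s : ℕ) (x : Fin s → ℝ), f s x ∈ Set.Icc (0:ℝ) 1)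
    (hsym : ∀ (s : ℕ) (σ : Equiv.Perm (Fin s)) (x : Fin s → ℝ), f s (x ∘ σ) = f s x)
    (hmono : ∀ (s : ℕ) (x y : Fin s → ℝ), (∀ j, x j ≤ y j) → f s x ≤ f s y)
    (p : Finset (Fin m) → ℝ)
    (hpdef : ∀ S : Finset (Fin m),
      p S = f S.card (fun j => T ((S.orderIsoOfFin rfl j : S) : Fin m)))
    (S : Finset (Fin m))
    (I : ℕ → Finset (Fin m))
    (hI0 : I 0 = ∅)
    (hIprop : ∀ i, 1 ≤ i → i ≤ m - S.card →
      I i ⊆ Sᶜ ∧ (I i).card = i ∧ ∀ j ∈ I i, ∀ k ∈ Sᶜ \ I i, T j ≤ T k) :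
    sInf {α | α ∈ Set.Icc (0:ℝ) 1 ∧ ∀ J : Finset (Fin m), S ⊆ J → p J ≤ α}
      = (Finset.range (m - S.card + 1)).sup'
          (by simp) (fun i => p (Finset.univ \ I i)) := by
  obtain rfl : p = scoreStat f T := funext hpdef
  have hI : ∀ i ≤ m - #S, I i ⊆ Sᶜ ∧ #(I i) = i ∧ ∀ j ∈ I i, ∀ k ∈ Sᶜ \ I i, T j ≤ T k := by
    intro i hi
    rcases i.eq_zero_or_pos with rfl | hi0
    · simp [hI0]
    · exact hIprop i hi0 hi
  have hupper : ∀ J, S ⊆ J →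
      scoreStat f T J ≤
        (range (m - #S + 1)).sup' (by simp) fun i => scoreStat f T (univ \ I i) := by
    intro J hSJ
    have hSJcard : #S ≤ #J := card_le_card hSJ
    have hJm : #J ≤ m := by simpa using card_le_univ J
    obtain ⟨-, hKcard, hK⟩ := hI (m - #J) (by omega)
    calc scoreStat f T J ≤ scoreStat f T (univ \ I (m - #J)) :=
          scoreStat_le_univ_sdiff f T hsym hmono hSJ
            (by simp only [hKcard, Fintype.card_fin]; omega) hK
      _ ≤ _ := le_sup' (fun i => scoreStat f T (univ \ I i)) (mem_range.2 (by omega))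
  have hS_sub : ∀ i ∈ range (m - #S + 1), S ⊆ univ \ I i := fun i hi x hxS =>
    have hIS := (hI i (by simpa [Nat.lt_succ_iff] using hi)).1
    mem_sdiff.2 ⟨mem_univ x, fun hxI => mem_compl.1 (hIS hxI) hxS⟩
  refine IsLeast.csInf_eq
    ⟨⟨⟨?_, ?_⟩, hupper⟩, fun α hα => sup'_le _ _ fun i hi => hα.2 _ (hS_sub i hi)⟩
  · exact (hrange _ _).1.trans (hupper univ (subset_univ S))
  · exact sup'_le _ _ fun i _ => (hrange _ _).2
end

section
/- Let m ≥ 1, let T_1,…,T_m ∈ ℝ be scores, and for each nonempty S ⊆ [m] let t_α(S) = 1{f(|S|, (T_i)_{i∈S}) ≤ α}, where for each s the function f(s, ·) : ℝ^s → [0,1] is invariant under permutations of its arguments and nondecreasing in each argument. Then for every nonempty S ⊆ [m], the closed-testing rejection indicator satisfies t̄_α(S) = min_{0 ≤ i ≤ m−|S|} t_α(S ∪ J_i*), where J_0* = ∅ and, for 1 ≤ i ≤ m−|S|, J_i* ⊆ [m]∖S is any set of i indices whose scores are the i largest scores in [m]∖S (i.e. T_j ≥ T_k for all j ∈ J_i*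 and k ∈ ([m]∖S)∖J_i*). In particular, closed testing of a single set S requires evaluating at most m−|S|+1 local tests. -/
/-!
A symmetric statistic that is nondecreasing in each score can only grow when a member of a
set is exchanged for an outsider with a larger score. Every superset `K ⊇ S` can be turned, by
such exchanges, into `S ∪ J_i*` with `i = |K| - |S|`: the elements of `K \ S` outside `J_i*`
are swapped one at a time against the missing top-scoring elements of `J_i*`. Hence the local
statistic is maximal, among supersets of `S` of a given size, at `S ∪ J_i*`, and closed
testing only has to check these `m - |S| + 1` sets.
-/

open Finset

theorem le_of_equiv_of_symm_of_mono {f : (s : ℕ) → (Fin s → ℝ) → ℝ}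
    (hsym : ∀ (s : ℕ) (σ : Equiv.Perm (Fin s)) (x : Fin s → ℝ), f s (x ∘ σ) = f s x)
    (hmono : ∀ (s : ℕ) (x y : Fin s → ℝ), (∀ j, x j ≤ y j) → f s x ≤ f s y)
    {s t : ℕ} (e : Fin s ≃ Fin t) {x : Fin s → ℝ} {y : Fin t → ℝ}
    (h : ∀ j, x j ≤ y (e j)) : f s x ≤ f t y := by
  obtain rfl : s = t := by simpa using Fintype.card_congr e
  calc f s x ≤ f s (y ∘ e) := hmono s _ _ h
    _ = f s y := hsym s e y

section LocalStat

variable {ι : Type*} [LinearOrder ι]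

/-- The paper's local p-value `p(A) = f(|A|, (T_a)_{a ∈ A})`. -/
noncomputable def localStat (f : (s : ℕ) → (Fin s → ℝ) → ℝ) (T : ι → ℝ) (A : Finset ι) : ℝ :=
  f #A fun j => T (A.orderIsoOfFin rfl j)

variable {f : (s : ℕ) → (Fin s → ℝ) → ℝ} {T : ι → ℝ}

theorem localStat_le_of_equiv
    (hsym : ∀ (s : ℕ) (σ : Equiv.Perm (Fin s)) (x : Fin s → ℝ), f s (x ∘ σ) = f s x)
    (hmono : ∀ (s : ℕ) (x y : Fin s → ℝ), (∀ j, x j ≤ y j) → f s x ≤ f s y)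
    {A B : Finset ι} (e : A ≃ B) (he : ∀ a : A, T a ≤ T (e a)) :
    localStat f T A ≤ localStat f T B :=
  le_of_equiv_of_symm_of_mono hsym hmono
    ((A.orderIsoOfFin rfl).toEquiv.trans (e.trans (B.orderIsoOfFin rfl).toEquiv.symm))
    fun j => by simpa using he (A.orderIsoOfFin rfl j)

theorem localStat_le_insert_erase
    (hsym : ∀ (s : ℕ) (σ : Equiv.Perm (Fin s)) (x : Fin s → ℝ), f s (x ∘ σ) = f s x)
    (hmono : ∀ (s : ℕ) (x y : Fin s → ℝ), (∀ j, x j ≤ y j) → f s x ≤ f s y)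
    {A : Finset ι} {a b : ι} (ha : a ∈ A) (hb : b ∉ A) (hab : T a ≤ T b) :
    localStat f T A ≤ localStat f T (insert b (A.erase a)) := by
  have hba : b ≠ a := ne_of_mem_of_not_mem ha hb |>.symm
  refine localStat_le_of_equiv hsym hmono ((Equiv.swap a b).subtypeEquiv fun x => ?_) ?_
  · rcases eq_or_ne x a with rfl | hxa
    · simp [ha]
    rcases eq_or_ne x b with rfl | hxb
    · simp [hb, hba.symm]
    · simp [Equiv.swap_apply_of_ne_of_ne hxa hxb, hxa, hxb]
  · rintro ⟨x, hx⟩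
    rcases eq_or_ne x a with rfl | hxa
    · simpa using hab
    · simp [Equiv.swap_apply_of_ne_of_ne hxa (ne_of_mem_of_not_mem hx hb)]

theorem localStat_le_of_card_eq
    (hsym : ∀ (s : ℕ) (σ : Equiv.Perm (Fin s)) (x : Fin s → ℝ), f s (x ∘ σ) = f s x)
    (hmono : ∀ (s : ℕ) (x y : Fin s → ℝ), (∀ j, x j ≤ y j) → f s x ≤ f s y)
    {A B : Finset ι} (hcard : #A = #B) (hdom : ∀ a ∈ A \ B, ∀ b ∈ B \ A, T a ≤ T b) :
    localStat f T A ≤ localStat f T B := by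
  induction hn : #(A \ B) generalizing A with
  | zero =>
    have hAB : A ⊆ B := sdiff_eq_empty_iff_subset.1 (card_eq_zero.1 hn)
    rw [eq_of_subset_of_card_le hAB hcard.ge]
  | succ n ih =>
    obtain ⟨a, ha⟩ : (A \ B).Nonempty := card_pos.1 (by omega)
    obtain ⟨b, hb⟩ : (B \ A).Nonempty := card_pos.1 (by rw [← card_sdiff_comm hcard]; omega)
    obtain ⟨haA, haB⟩ := mem_sdiff.1 ha
    obtain ⟨hbB, hbA⟩ := mem_sdiff.1 hb
    set A' := insert b (A.erase a)
    have hA' : #A' = #B := by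
      rw [card_insert_of_notMem (by simp [hbA]), card_erase_of_mem haA, hcard]
      have := card_pos.2 ⟨b, hbB⟩
      omega
    have hA'B : A' \ B = (A \ B).erase a := by
      ext x
      simp only [A', mem_sdiff, mem_insert, mem_erase]
      constructor
      · rintro ⟨rfl | hx, hxB⟩ <;> tauto
      · tauto
    have hBA' : B \ A' ⊆ B \ A := fun x hx => by
      simp only [A', mem_sdiff, mem_insert, mem_erase, not_or] at hx ⊢
      refine ⟨hx.1, fun hxA => hx.2.2 ⟨?_, hxA⟩⟩
      rintro rfl
      exact haB hx.1
    refine (localStat_le_insert_erase hsym hmono haA hbA (hdom a ha b hb)).trans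
      (ih hA' (fun a' ha' b' hb' => hdom a' ?_ b' (hBA' hb')) ?_)
    · exact mem_of_mem_erase (hA'B ▸ ha')
    · rw [hA'B, card_erase_of_mem ha]
      omega

theorem localStat_le_union_of_top_scores
    (hsym : ∀ (s : ℕ) (σ : Equiv.Perm (Fin s)) (x : Fin s → ℝ), f s (x ∘ σ) = f s x)
    (hmono : ∀ (s : ℕ) (x y : Fin s → ℝ), (∀ j, x j ≤ y j) → f s x ≤ f s y)
    {S K J : Finset ι} (hSK : S ⊆ K) (hJS : Disjoint S J) (hJcard : #J = #K - #S)
    (hJtop : ∀ j ∈ J, ∀ k ∉ S, k ∉ J → T k ≤ T j) :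
    localStat f T K ≤ localStat f T (S ∪ J) := by
  refine localStat_le_of_card_eq hsym hmono ?_ fun a ha b hb => ?_
  · rw [card_union_of_disjoint hJS, hJcard]
    have := card_le_card hSK
    omega
  · simp only [mem_sdiff, mem_union, not_or] at ha hb
    have hbJ : b ∈ J := hb.1.resolve_left fun hbS => hb.2 (hSK hbS)
    exact hJtop b hbJ a ha.2.1 ha.2.2

end LocalStat

theorem stmt_2_general (m : ℕ) (T : Fin m → ℝ) (α : ℝ)
    (f : (s : ℕ) → (Fin s → ℝ) → ℝ)
    (hsym : ∀ (s : ℕ) (σ : Equiv.Perm (Fin s)) (x : Fin s → ℝ), f s (x ∘ σ) = f s x)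
    (hmono : ∀ (s : ℕ) (x y : Fin s → ℝ), (∀ j, x j ≤ y j) → f s x ≤ f s y)
    (p : Finset (Fin m) → ℝ)
    (hpdef : ∀ S : Finset (Fin m),
      p S = f S.card (fun j => T ((S.orderIsoOfFin rfl j : S) : Fin m)))
    (S : Finset (Fin m))
    (J : ℕ → Finset (Fin m))
    (hJ0 : J 0 = ∅)
    (hJprop : ∀ i, 1 ≤ i → i ≤ m - S.card →
      J i ⊆ Sᶜ ∧ (J i).card = i ∧ ∀ j ∈ J i, ∀ k ∈ Sᶜ \ J i, T k ≤ T j) :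
    ((∀ K : Finset (Fin m), S ⊆ K → p K ≤ α) ↔
      ∀ i ≤ m - S.card, p (S ∪ J i) ≤ α) := by
  obtain rfl : p = localStat f T := funext hpdef
  have hJ : ∀ i ≤ m - #S,
      Disjoint S (J i) ∧ #(J i) = i ∧ ∀ j ∈ J i, ∀ k ∉ S, k ∉ J i → T k ≤ T j := by
    intro i hi
    rcases Nat.eq_zero_or_pos i with rfl | hpos
    · simp [hJ0]
    obtain ⟨hJS, hJcard, hJtop⟩ := hJprop i hpos hi
    exact ⟨(subset_compl_iff_disjoint_right.1 hJS).symm, hJcard,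
      fun j hj k hkS hkJ => hJtop j hj k (by simp [hkS, hkJ])⟩
  refine ⟨fun h i _ => h _ subset_union_left, fun h K hSK => ?_⟩
  have hi : #K - #S ≤ m - #S := Nat.sub_le_sub_right (by simpa using K.card_le_univ) _
  obtain ⟨hJS, hJcard, hJtop⟩ := hJ _ hi
  exact (localStat_le_union_of_top_scores hsym hmono hSK hJS hJcard hJtop).trans (h _ hi)

/-- for a symmetric monotonic local test `t_α(S) = 1{p(S) ≤ α}` with
`p(S) = f(|S|, (T_i)_{i∈S})`, closed testing rejects `S` iff the local test rejects
`S ∪ J_i*` for every `0 ≤ i ≤ m - |S|`, where `J_i*` collects `i` indices carrying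
the `i` largest scores in `Sᶜ`. -/
theorem stmt_2 (m : ℕ) (hm : 1 ≤ m) (T : Fin m → ℝ) (α : ℝ)
    (f : (s : ℕ) → (Fin s → ℝ) → ℝ)
    (hrange : ∀ (s : ℕ) (x : Fin s → ℝ), f s x ∈ Set.Icc (0:ℝ) 1)
    (hsym : ∀ (s : ℕ) (σ : Equiv.Perm (Fin s)) (x : Fin s → ℝ), f s (x ∘ σ) = f s x)
    (hmono : ∀ (s : ℕ) (x y : Fin s → ℝ), (∀ j, x j ≤ y j) → f s x ≤ f s y)
    (p : Finset (Fin m) → ℝ)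
    (hpdef : ∀ S : Finset (Fin m),
      p S = f S.card (fun j => T ((S.orderIsoOfFin rfl j : S) : Fin m)))
    (S : Finset (Fin m)) (hS : S.Nonempty)
    (J : ℕ → Finset (Fin m))
    (hJ0 : J 0 = ∅)
    (hJprop : ∀ i, 1 ≤ i → i ≤ m - S.card →
      J i ⊆ Sᶜ ∧ (J i).card = i ∧ ∀ j ∈ J i, ∀ k ∈ Sᶜ \ J i, T k ≤ T j) :
    ((∀ K : Finset (Fin m), S ⊆ K → p K ≤ α) ↔
      ∀ i ≤ m - S.card, p (S ∪ J i) ≤ α) :=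
  stmt_2_general m T α f hsym hmono p hpdef S J hJ0 hJprop
end

section
/- Let m ≥ 1, T_1,…,T_m ∈ ℝ, let h : ℝ → ℝ be nondecreasing and g : {1,…,m} → ℝ. For nonempty J ⊆ [m] let t(J) = 1{Σ_{i∈J} h(T_i) ≤ g(|J|)}, let t̄(J) = 1 iff t(K) = 1 for every K with J ⊆ K ⊆ [m], and for S ⊆ [m] define the simultaneous false-discovery bound ē(S) = max({|I| : ∅ ≠ I ⊆ S, t̄(I) = 0} ∪ {0}). Then for every e ∈ {1,…,|S|}: ē(S) ≥ e if and only if there exists a ∈ {e,…,m} with W_{a,e} > g(a), where W_{a,e} = max{ Σ_{i∈J} h(T_i) : J ⊆ [m], |J| = a, |J ∩ S| ≥ e }. Moreover W_{a,e} is attained by the set consisting of e indices whose scores are the e largest scores in S together with a−e indices whose scores are the a−e largest scores among the remaining indices of [m]. -/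
/-- Comparison of sums of a monotone transform via threshold counts. -/
private lemma sum_h_le {α : Type*} [DecidableEq α] (T : α → ℝ) (h : ℝ → ℝ)
    (hmono : Monotone h) :
    ∀ (n : ℕ) (J J₀ : Finset α), J.card = n → J₀.card = n →
      (∀ r : ℝ, (J.filter (fun i => r ≤ T i)).card ≤ (J₀.filter (fun i => r ≤ T i)).card) →
      ∑ i ∈ J, h (T i) ≤ ∑ i ∈ J₀, h (T i) := by
  intro n
  induction n with
  | zero =>
    intro J J₀ hJ hJ₀ _
    simp [Finset.card_eq_zero.mp hJ, Finset.card_eq_zero.mp hJ₀]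
  | succ n ih =>
    intro J J₀ hJ hJ₀ hcond
    have hJne : J.Nonempty := Finset.card_pos.mp (by omega)
    obtain ⟨j, hjJ, hjmax⟩ := Finset.exists_max_image J T hJne
    have hjf : j ∈ J.filter (fun i => T j ≤ T i) := Finset.mem_filter.mpr ⟨hjJ, le_refl _⟩
    have hne : (J₀.filter (fun i => T j ≤ T i)).Nonempty := by
      rw [← Finset.card_pos]
      have h1 := hcond (T j)
      have h2 := Finset.card_pos.mpr ⟨j, hjf⟩
      omega
    obtain ⟨k, hk⟩ := hne
    rw [Finset.mem_filter] at hk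
    obtain ⟨hkJ₀, hjk⟩ := hk
    have key : ∀ r : ℝ, ((J.erase j).filter (fun i => r ≤ T i)).card ≤
        ((J₀.erase k).filter (fun i => r ≤ T i)).card := by
      intro r
      by_cases hr : r ≤ T j
      · have hjf' : j ∈ J.filter (fun i => r ≤ T i) := Finset.mem_filter.mpr ⟨hjJ, hr⟩
        have hkf' : k ∈ J₀.filter (fun i => r ≤ T i) :=
          Finset.mem_filter.mpr ⟨hkJ₀, le_trans hr hjk⟩
        rw [Finset.filter_erase, Finset.filter_erase,
          Finset.card_erase_of_mem hjf', Finset.card_erase_of_mem hkf']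
        exact Nat.sub_le_sub_right (hcond r) 1
      · have hempty : (J.erase j).filter (fun i => r ≤ T i) = ∅ := by
          apply Finset.filter_eq_empty_iff.mpr
          intro x hx
          have hx' := hjmax x (Finset.mem_of_mem_erase hx)
          push_neg at hr ⊢
          exact lt_of_le_of_lt hx' hr
        simp [hempty]
    have hs := ih (J.erase j) (J₀.erase k)
      (by rw [Finset.card_erase_of_mem hjJ, hJ]; rfl)
      (by rw [Finset.card_erase_of_mem hkJ₀, hJ₀]; rfl) key
    calc ∑ i ∈ J, h (T i) = ∑ i ∈ J.erase j, h (T i) + h (T j) :=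
          (Finset.sum_erase_add J _ hjJ).symm
      _ ≤ ∑ i ∈ J₀.erase k, h (T i) + h (T k) := add_le_add hs (hmono hjk)
      _ = ∑ i ∈ J₀, h (T i) := Finset.sum_erase_add J₀ _ hkJ₀

/-- A "top" subset captures at least `min |X| (count in Y)` of the high scores. -/
private lemma top_filter {α : Type*} [DecidableEq α] (T : α → ℝ) {X Y : Finset α}
    (hXY : X ⊆ Y) (htop : ∀ j ∈ X, ∀ k ∈ Y \ X, T k ≤ T j) (r : ℝ) :
    min X.card ((Y.filter (fun i => r ≤ T i)).card) ≤ (X.filter (fun i => r ≤ T i)).card := by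
  by_cases hk : ∃ k ∈ Y \ X, r ≤ T k
  · obtain ⟨k, hkY, hkr⟩ := hk
    have hfe : X.filter (fun i => r ≤ T i) = X :=
      Finset.filter_eq_self.mpr (fun j hj => le_trans hkr (htop j hj k hkY))
    rw [hfe]
    exact min_le_left _ _
  · push_neg at hk
    have hsub : Y.filter (fun i => r ≤ T i) ⊆ X.filter (fun i => r ≤ T i) := by
      intro x hx
      rw [Finset.mem_filter] at hx ⊢
      refine ⟨?_, hx.2⟩
      by_contra hxX
      exact absurd hx.2 (not_le.mpr (hk x (Finset.mem_sdiff.mpr ⟨hx.1, hxX⟩)))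
    exact le_trans (min_le_right _ _) (Finset.card_le_card hsub)

/-- for a separable, symmetric, monotonic local test
`t(J) = 1{Σ_{i∈J} h(T_i) ≤ g(|J|)}`, the simultaneous false-discovery bound
`ē(S)` satisfies `ē(S) ≥ e ↔ ∃ a ∈ {e,…,m}, W_{a,e} > g(a)`, where `W_{a,e}` is the
largest value of `Σ_{i∈J} h(T_i)` over `J` with `|J| = a` and `|J ∩ S| ≥ e`; moreover
`W_{a,e}` is attained by taking the `e` indices with largest scores in `S` together
with the `a − e` indices with largest scores among the remaining indices. -/
theorem stmt_3 (m : ℕ) (hm : 1 ≤ m) (T : Fin m → ℝ)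
    (h : ℝ → ℝ) (hmono : Monotone h) (g : ℕ → ℝ)
    (t : Finset (Fin m) → Prop)
    (ht : ∀ J : Finset (Fin m), t J ↔ ∑ i ∈ J, h (T i) ≤ g J.card)
    (S : Finset (Fin m))
    (ebar : ℕ)
    (hebar : ebar = sSup (insert 0
      {n | ∃ I : Finset (Fin m), I ⊆ S ∧ I.Nonempty ∧
        ¬ (∀ K : Finset (Fin m), I ⊆ K → t K) ∧ n = I.card}))
    (W : ℕ → ℕ → ℝ)
    (hW : ∀ a e, W a e = sSup {x | ∃ J : Finset (Fin m),
      J.card = a ∧ e ≤ (J ∩ S).card ∧ x = ∑ i ∈ J, h (T i)}) :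
    ∀ e, 1 ≤ e → e ≤ S.card →
      ((e ≤ ebar ↔ ∃ a, e ≤ a ∧ a ≤ m ∧ g a < W a e) ∧
        (∀ a, e ≤ a → a ≤ m →
          ∀ A B : Finset (Fin m),
            A ⊆ S → A.card = e → (∀ j ∈ A, ∀ k ∈ S \ A, T k ≤ T j) →
            B ⊆ Aᶜ → B.card = a - e → (∀ j ∈ B, ∀ k ∈ Aᶜ \ B, T k ≤ T j) →
            ∑ i ∈ A ∪ B, h (T i) = W a e)) := by
  intro e he1 he2
  -- the W-defining sets are finite
  have hfin : ∀ a e', {x | ∃ J : Finset (Fin m),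
      J.card = a ∧ e' ≤ (J ∩ S).card ∧ x = ∑ i ∈ J, h (T i)}.Finite := by
    intro a e'
    apply Set.Finite.subset (Set.finite_range (fun J : Finset (Fin m) => ∑ i ∈ J, h (T i)))
    rintro x ⟨J, -, -, rfl⟩
    exact ⟨J, rfl⟩
  -- nonemptiness of the W-defining set when e ≤ a ≤ m
  have hne : ∀ a, e ≤ a → a ≤ m → {x | ∃ J : Finset (Fin m),
      J.card = a ∧ e ≤ (J ∩ S).card ∧ x = ∑ i ∈ J, h (T i)}.Nonempty := by
    intro a hea ham
    obtain ⟨A', hA'S, hA'card⟩ := Finset.exists_subset_card_eq he2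
    obtain ⟨J, hAJ, -, hJcard⟩ := Finset.exists_subsuperset_card_eq (n := a)
      (Finset.subset_univ A') (by rw [hA'card]; exact hea)
      (by simp only [Finset.card_univ, Fintype.card_fin]; exact ham)
    refine ⟨∑ i ∈ J, h (T i), J, hJcard, ?_, rfl⟩
    calc e = A'.card := hA'card.symm
      _ ≤ (J ∩ S).card := Finset.card_le_card (Finset.subset_inter hAJ hA'S)
  -- the ebar-defining set is bounded above
  have hbdd : BddAbove (insert 0
      {n | ∃ I : Finset (Fin m), I ⊆ S ∧ I.Nonempty ∧
        ¬ (∀ K : Finset (Fin m), I ⊆ K → t K) ∧ n = I.card}) := by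
    refine ⟨m, ?_⟩
    rintro n (rfl | ⟨I, -, -, -, rfl⟩)
    · exact Nat.zero_le m
    · simpa using Finset.card_le_univ I
  constructor
  · constructor
    · -- forward direction
      intro hle
      have hsup_mem : ebar ∈ insert 0
          {n | ∃ I : Finset (Fin m), I ⊆ S ∧ I.Nonempty ∧
            ¬ (∀ K : Finset (Fin m), I ⊆ K → t K) ∧ n = I.card} := by
        rw [hebar]
        exact Nat.sSup_mem ⟨0, Set.mem_insert _ _⟩ hbdd
      rcases hsup_mem with h0 | ⟨I, hIS, hIne, hIt, hIcard⟩
      · omega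
      · push_neg at hIt
        obtain ⟨K, hIK, htK⟩ := hIt
        rw [ht K] at htK
        push_neg at htK
        refine ⟨K.card, ?_, by simpa using Finset.card_le_univ K, ?_⟩
        · calc e ≤ ebar := hle
            _ = I.card := hIcard
            _ ≤ K.card := Finset.card_le_card hIK
        · rw [hW]
          refine lt_of_lt_of_le htK (le_csSup (hfin _ _).bddAbove ?_)
          refine ⟨K, rfl, ?_, rfl⟩
          calc e ≤ I.card := hIcard ▸ hle
            _ ≤ (K ∩ S).card := Finset.card_le_card (Finset.subset_inter hIK hIS)
    · -- reverse direction
      rintro ⟨a, hea, ham, hgW⟩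
      have hmem : sSup {x | ∃ J : Finset (Fin m),
          J.card = a ∧ e ≤ (J ∩ S).card ∧ x = ∑ i ∈ J, h (T i)} ∈
          {x | ∃ J : Finset (Fin m),
            J.card = a ∧ e ≤ (J ∩ S).card ∧ x = ∑ i ∈ J, h (T i)} :=
        Set.Nonempty.csSup_mem (hne a hea ham) (hfin a e)
      obtain ⟨J, hJa, hJSe, hsum⟩ := hmem
      have hIN : (J ∩ S).card ∈ insert 0
          {n | ∃ I : Finset (Fin m), I ⊆ S ∧ I.Nonempty ∧
            ¬ (∀ K : Finset (Fin m), I ⊆ K → t K) ∧ n = I.card} := by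
        refine Set.mem_insert_of_mem _ ⟨J ∩ S, Finset.inter_subset_right, ?_, ?_, rfl⟩
        · rw [← Finset.card_pos]; omega
        · intro hall
          have htJ := (ht J).mp (hall J Finset.inter_subset_left)
          rw [hJa, ← hsum, ← hW] at htJ
          exact absurd htJ (not_le.mpr hgW)
      calc e ≤ (J ∩ S).card := hJSe
        _ ≤ ebar := by rw [hebar]; exact le_csSup hbdd hIN
  · -- attainment
    intro a hea ham A B hAS hAcard hAtop hBA hBcard hBtop
    have hdisj : Disjoint A B := by
      rw [Finset.disjoint_left]
      intro x hxA hxB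
      exact (Finset.mem_compl.mp (hBA hxB)) hxA
    have hABcard : (A ∪ B).card = a := by
      rw [Finset.card_union_of_disjoint hdisj, hAcard, hBcard]
      omega
    have hmemAB : (∑ i ∈ A ∪ B, h (T i)) ∈ {x | ∃ J : Finset (Fin m),
        J.card = a ∧ e ≤ (J ∩ S).card ∧ x = ∑ i ∈ J, h (T i)} := by
      refine ⟨A ∪ B, hABcard, ?_, rfl⟩
      calc e = A.card := hAcard.symm
        _ ≤ ((A ∪ B) ∩ S).card := Finset.card_le_card
            (Finset.subset_inter Finset.subset_union_left hAS)
    have hub : ∀ x ∈ {x | ∃ J : Finset (Fin m),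
        J.card = a ∧ e ≤ (J ∩ S).card ∧ x = ∑ i ∈ J, h (T i)},
        x ≤ ∑ i ∈ A ∪ B, h (T i) := by
      rintro x ⟨J, hJa, hJS, rfl⟩
      apply sum_h_le T h hmono a J (A ∪ B) hJa hABcard
      intro r
      -- counting argument
      have hsplitAB : ((A ∪ B).filter (fun i => r ≤ T i)).card =
          (A.filter (fun i => r ≤ T i)).card + (B.filter (fun i => r ≤ T i)).card := by
        rw [Finset.filter_union]
        exact Finset.card_union_of_disjoint
          (hdisj.mono (Finset.filter_subset _ _) (Finset.filter_subset _ _))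
      have hFA := top_filter T hAS hAtop r
      rw [hAcard] at hFA
      have hFB := top_filter T hBA hBtop r
      rw [hBcard] at hFB
      have hJeq : (J ∩ S) ∪ (J \ S) = J := by
        ext x; simp only [Finset.mem_union, Finset.mem_inter, Finset.mem_sdiff]; tauto
      have hJeqA : (J ∩ A) ∪ (J \ A) = J := by
        ext x; simp only [Finset.mem_union, Finset.mem_inter, Finset.mem_sdiff]; tauto
      have hsplit1 : (J.filter (fun i => r ≤ T i)).card ≤
          ((J ∩ S).filter (fun i => r ≤ T i)).card +
          ((J \ S).filter (fun i => r ≤ T i)).card := by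
        calc (J.filter (fun i => r ≤ T i)).card
            = (((J ∩ S) ∪ (J \ S)).filter (fun i => r ≤ T i)).card := by rw [hJeq]
          _ = ((J ∩ S).filter (fun i => r ≤ T i) ∪
              (J \ S).filter (fun i => r ≤ T i)).card := by rw [Finset.filter_union]
          _ ≤ _ := Finset.card_union_le _ _
      have hsplit2 : (J.filter (fun i => r ≤ T i)).card ≤
          ((J ∩ A).filter (fun i => r ≤ T i)).card +
          ((J \ A).filter (fun i => r ≤ T i)).card := by
        calc (J.filter (fun i => r ≤ T i)).card
            = (((J ∩ A) ∪ (J \ A)).filter (fun i => r ≤ T i)).card := by rw [hJeqA]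
          _ = ((J ∩ A).filter (fun i => r ≤ T i) ∪
              (J \ A).filter (fun i => r ≤ T i)).card := by rw [Finset.filter_union]
          _ ≤ _ := Finset.card_union_le _ _
      have h2 : ((J ∩ S).filter (fun i => r ≤ T i)).card ≤
          (S.filter (fun i => r ≤ T i)).card :=
        Finset.card_le_card (Finset.filter_subset_filter _ Finset.inter_subset_right)
      have h3 : ((J \ S).filter (fun i => r ≤ T i)).card ≤ (J \ S).card :=
        Finset.card_filter_le _ _
      have h4 : (J \ S).card + (J ∩ S).card = a := by
        rw [Finset.card_sdiff_add_card_inter, hJa]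
      have h6 : ((J \ S).filter (fun i => r ≤ T i)).card ≤
          (Aᶜ.filter (fun i => r ≤ T i)).card := by
        apply Finset.card_le_card
        apply Finset.filter_subset_filter
        intro x hx
        rw [Finset.mem_sdiff] at hx
        rw [Finset.mem_compl]
        exact fun hxA => hx.2 (hAS hxA)
      have h7 : ((J ∩ A).filter (fun i => r ≤ T i)).card ≤ e := by
        calc ((J ∩ A).filter (fun i => r ≤ T i)).card ≤ (J ∩ A).card :=
              Finset.card_filter_le _ _
          _ ≤ A.card := Finset.card_le_card Finset.inter_subset_right
          _ = e := hAcard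
      have h8 : ((J \ A).filter (fun i => r ≤ T i)).card ≤
          (Aᶜ.filter (fun i => r ≤ T i)).card := by
        apply Finset.card_le_card
        apply Finset.filter_subset_filter
        intro x hx
        rw [Finset.mem_sdiff] at hx
        exact Finset.mem_compl.mpr hx.2
      have h9 : (J.filter (fun i => r ≤ T i)).card ≤ a := by
        calc (J.filter (fun i => r ≤ T i)).card ≤ J.card := Finset.card_filter_le _ _
          _ = a := hJa
      rw [hsplitAB]
      omega
    rw [hW]
    exact le_antisymm (le_csSup (hfin a e).bddAbove hmemAB) (csSup_le ⟨_, hmemAB⟩ hub)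
end

section
/- Let p_1 and p_2 be random variables on a common probability space taking values in (0,1] such that Pr(p_i ≤ x) ≤ x for every x ∈ [0,1] and i = 1,2 (i.e. p_1, p_2 are valid p-values). Then for every α ∈ (0,1], Pr( 2·p_1·p_2/(p_1 + p_2) ≤ α/2 ) ≤ α; equivalently, Pr( 1/p_1 + 1/p_2 ≥ 4/α ) ≤ α. -/
open MeasureTheory

/-- for valid p-values `p₁, p₂` with values in `(0,1]`, the harmonic
mean satisfies `Pr(2p₁p₂/(p₁+p₂) ≤ α/2) ≤ α` for every `α ∈ (0,1]`. -/
theorem stmt_4 {Ω : Type*} [MeasurableSpace Ω] (μ : Measure Ω) [IsProbabilityMeasure μ]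
    (p₁ p₂ : Ω → ℝ)
    (h₁ : ∀ ω, p₁ ω ∈ Set.Ioc (0:ℝ) 1) (h₂ : ∀ ω, p₂ ω ∈ Set.Ioc (0:ℝ) 1)
    (hv₁ : ∀ x ∈ Set.Icc (0:ℝ) 1, μ {ω | p₁ ω ≤ x} ≤ ENNReal.ofReal x)
    (hv₂ : ∀ x ∈ Set.Icc (0:ℝ) 1, μ {ω | p₂ ω ≤ x} ≤ ENNReal.ofReal x)
    (α : ℝ) (hα : α ∈ Set.Ioc (0:ℝ) 1) :
    μ {ω | 2 * p₁ ω * p₂ ω / (p₁ ω + p₂ ω) ≤ α / 2} ≤ ENNReal.ofReal α := by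
  obtain ⟨hα0, hα1⟩ := hα
  have hsub : {ω | 2 * p₁ ω * p₂ ω / (p₁ ω + p₂ ω) ≤ α / 2} ⊆
      {ω | p₁ ω ≤ α / 2} ∪ {ω | p₂ ω ≤ α / 2} := by
    intro ω hω
    simp only [Set.mem_setOf_eq] at hω
    obtain ⟨ha0, _⟩ := h₁ ω
    obtain ⟨hb0, _⟩ := h₂ ω
    set a := p₁ ω
    set b := p₂ ω
    have hab : 0 < a + b := by linarith
    have hmin : min a b ≤ 2 * a * b / (a + b) := by
      rw [le_div_iff₀ hab]
      rcases le_total a b with h | h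
      · rw [min_eq_left h]; nlinarith
      · rw [min_eq_right h]; nlinarith
    rcases le_total a b with h | h
    · left; simp only [Set.mem_setOf_eq]
      calc a = min a b := (min_eq_left h).symm
        _ ≤ _ := hmin
        _ ≤ α / 2 := hω
    · right; simp only [Set.mem_setOf_eq]
      calc b = min a b := (min_eq_right h).symm
        _ ≤ _ := hmin
        _ ≤ α / 2 := hω
  have hhalf : (α / 2) ∈ Set.Icc (0:ℝ) 1 := ⟨by linarith, by linarith⟩
  calc μ {ω | 2 * p₁ ω * p₂ ω / (p₁ ω + p₂ ω) ≤ α / 2}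
      ≤ μ ({ω | p₁ ω ≤ α / 2} ∪ {ω | p₂ ω ≤ α / 2}) := measure_mono hsub
    _ ≤ μ {ω | p₁ ω ≤ α / 2} + μ {ω | p₂ ω ≤ α / 2} := measure_union_le _ _
    _ ≤ ENNReal.ofReal (α / 2) + ENNReal.ofReal (α / 2) :=
        add_le_add (hv₁ _ hhalf) (hv₂ _ hhalf)
    _ = ENNReal.ofReal α := by
        rw [← ENNReal.ofReal_add (by linarith) (by linarith)]
        ring_nf
end

section
/- For every α ∈ (0,1) there exist a probability space and random variables p_1, p_2 on it, each uniformly distributed on [0,1] (but possibly dependent), such that Pr( 2·p_1·p_2/(p_1 + p_2) ≤ α/2 ) = α; that is, the level-α bound for the harmonic mean of two p-values is attained by some joint distribution (copula) with uniform marginals. -/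
open MeasureTheory Set

/-!
Let `U` be uniform on `[0, 1]` and put `p₁ = U`, `p₂ = α - U` if `U ≤ α` and `p₂ = U` otherwise.
Reflecting `[0, α]` onto itself preserves Lebesgue measure, so `p₂` is uniform as well. On
`{U ≤ α}` we have `p₁ + p₂ = α`, and the harmonic mean is at most the arithmetic mean `α / 2`;
on `{U > α}` the harmonic mean is `U > α / 2`. Hence the event has probability exactly `α`.
-/

lemma two_mul_mul_div_add_le_half_add {u v : ℝ} (h : 0 ≤ u + v) :
    2 * u * v / (u + v) ≤ (u + v) / 2 := by
  rcases h.eq_or_lt with h | h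
  · simp [← h]
  · rw [div_le_iff₀ h]
    nlinarith [sq_nonneg (u - v)]

lemma two_mul_mul_self_div_add_self (u : ℝ) : 2 * u * u / (u + u) = u := by
  rcases eq_or_ne u 0 with rfl | hu
  · simp
  · field_simp
    ring

lemma map_const_sub_volume_restrict_Icc (a b c : ℝ) :
    (volume.restrict (Icc a b)).map (c - ·) = volume.restrict (Icc (c - b) (c - a)) := by
  have hpre := preimage_const_sub_Icc c (c - b) (c - a)
  rw [sub_sub_cancel, sub_sub_cancel] at hpre
  rw [← hpre, ← Measure.restrict_map (by fun_prop) measurableSet_Icc,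
    Measure.map_sub_left_eq_self]

noncomputable def reflectBelow (a u : ℝ) : ℝ := if u ≤ a then a - u else u

lemma measurable_reflectBelow (a : ℝ) : Measurable (reflectBelow a) :=
  Measurable.ite (measurableSet_le measurable_id measurable_const) (by fun_prop) measurable_id

lemma map_reflectBelow_volume_restrict_Icc {a b : ℝ} (ha : 0 ≤ a) (hab : a ≤ b) :
    (volume.restrict (Icc 0 b)).map (reflectBelow a) = volume.restrict (Icc 0 b) := by
  have hdisj : Disjoint (Icc 0 a) (Ioc a b) :=
    disjoint_left.2 fun _ hu hu' => not_le.2 hu'.1 hu.2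
  have hreflect : (volume.restrict (Icc 0 a)).map (reflectBelow a) = volume.restrict (Icc 0 a) := by
    have heq : reflectBelow a =ᵐ[volume.restrict (Icc 0 a)] (a - ·) := by
      filter_upwards [ae_restrict_mem measurableSet_Icc] with u hu
      exact if_pos hu.2
    rw [Measure.map_congr heq, map_const_sub_volume_restrict_Icc, sub_self, sub_zero]
  have hfix : (volume.restrict (Ioc a b)).map (reflectBelow a) = volume.restrict (Ioc a b) := by
    have heq : reflectBelow a =ᵐ[volume.restrict (Ioc a b)] id := by
      filter_upwards [ae_restrict_mem measurableSet_Ioc] with u hu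
      exact if_neg (not_le.2 hu.1)
    rw [Measure.map_congr heq, Measure.map_id]
  rw [← Icc_union_Ioc_eq_Icc ha hab, Measure.restrict_union hdisj measurableSet_Ioc,
    Measure.map_add _ _ (measurable_reflectBelow a), hreflect, hfix]

lemma harmonicMean_reflectBelow_le_half_iff {a u : ℝ} (ha : 0 < a) :
    2 * u * reflectBelow a u / (u + reflectBelow a u) ≤ a / 2 ↔ u ≤ a := by
  unfold reflectBelow
  split_ifs with hu
  · refine iff_of_true ?_ hu
    have h := two_mul_mul_div_add_le_half_add (u := u) (v := a - u) (by linarith)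
    rwa [add_sub_cancel] at h ⊢
  · rw [two_mul_mul_self_div_add_self]
    exact iff_of_false (by linarith) hu

/-- for every `α ∈ (0,1)` there is a joint distribution (copula) of two
uniformly-distributed-on-`[0,1]` p-values attaining `Pr(2p₁p₂/(p₁+p₂) ≤ α/2) = α`. -/
theorem stmt_5 (α : ℝ) (hα : α ∈ Set.Ioo (0:ℝ) 1) :
    ∃ μ : Measure (ℝ × ℝ), IsProbabilityMeasure μ ∧
      μ.map Prod.fst = volume.restrict (Set.Icc (0:ℝ) 1) ∧
      μ.map Prod.snd = volume.restrict (Set.Icc (0:ℝ) 1) ∧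
      μ {q : ℝ × ℝ | 2 * q.1 * q.2 / (q.1 + q.2) ≤ α / 2} = ENNReal.ofReal α := by
  obtain ⟨hα0, hα1⟩ := hα
  have : IsProbabilityMeasure (volume.restrict (Icc (0:ℝ) 1)) := ⟨by simp⟩
  have hg : Measurable fun u => (u, reflectBelow α u) :=
    measurable_id.prodMk (measurable_reflectBelow α)
  have hevent : MeasurableSet {q : ℝ × ℝ | 2 * q.1 * q.2 / (q.1 + q.2) ≤ α / 2} :=
    measurableSet_le (by fun_prop) measurable_const
  have hpre : (fun u => (u, reflectBelow α u)) ⁻¹'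
      {q : ℝ × ℝ | 2 * q.1 * q.2 / (q.1 + q.2) ≤ α / 2} = Iic α := by
    ext u
    exact harmonicMean_reflectBelow_le_half_iff hα0
  have hcap : Iic α ∩ Icc 0 1 = Icc 0 α := by
    ext u
    simp only [mem_inter_iff, mem_Iic, mem_Icc]
    exact ⟨fun h => ⟨h.2.1, h.1⟩, fun h => ⟨h.2, h.1, h.2.trans hα1.le⟩⟩
  refine ⟨(volume.restrict (Icc 0 1)).map fun u => (u, reflectBelow α u),
    Measure.isProbabilityMeasure_map hg.aemeasurable, ?_, ?_, ?_⟩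
  · rw [Measure.map_map measurable_fst hg]
    exact Measure.map_id
  · rw [Measure.map_map measurable_snd hg]
    exact map_reflectBelow_volume_restrict_Icc hα0.le hα1.le
  · rw [Measure.map_apply hg hevent, hpre, Measure.restrict_apply measurableSet_Iic,
      hcap, Real.volume_Icc, sub_zero]
end

section
/- Fix m ≥ 1, r ≥ 1 and 0 < c < 1/(2m). Let M_m be the set of m×m real positive semidefinite matrices Σ with unit diagonal (Σ_ii = 1) and off-diagonal entries Σ_ij ∈ [−1/m, 1], and let M_m^E ⊆ M_m be the subset of equicorrelation matrices (all off-diagonal entries equal). For Σ ∈ M_m let X = (X_1,…,X_m) be a centered multivariate Gaussian vector with covariance Σ, let p_i = Φ(−X_i), and set α̃_m(Σ, r, c) = Pr( ((1/m) Σ_{i=1}^m p_i^r)^{1/r} ≤ c ). Then sup_{Σ ∈ M_m} α̃_m(Σ, r, c) = sup_{Σ ∈ M_m^E} α̃_m(Σ, r, c) = α̃_m(1_m 1_m^T, r, c), where 1_m 1_m^T is the all-ones matrix (perfect correlation). -/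
/-!
Write `X = A Z` with `Z` standard normal and `Σ = A Aᵀ`. If the generalized mean of the
p-values is at most `c`, then so is their arithmetic mean (power-mean inequality), hence every
p-value is below `m c < 1/2` and every `X_i` is positive. On `[0, ∞)` the map `x ↦ Φ(-x)` is
convex, so Jensen gives `Φ(-X̄) ≤ c`, i.e. `X̄ ≥ q` where `Φ(-q) = c`. The sample mean `X̄` is
centred Gaussian with variance `m⁻² ∑ Σ_ik ≤ 1`, and since `q > 0` its upper tail at `q` is at
most the standard one, `Φ(-q) = c`. When `Σ` is the all-ones matrix the rows of `A` coincide,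
all `X_i` equal `X̄ ~ N(0,1)`, and the rejection event is exactly `{X̄ ≥ q}`, of probability `c`.
-/

open MeasureTheory ProbabilityTheory

/-- Standard normal CDF `Φ`. -/
noncomputable def Phi (x : ℝ) : ℝ := ((gaussianReal 0 1 : Measure ℝ) (Set.Iic x)).toReal

/-- Law of a centered Gaussian vector `X = A Z` with `Z` i.i.d. standard normal,
so that `X` has covariance `A Aᵀ`. -/
noncomputable def gaussianVec (m : ℕ) (A : Matrix (Fin m) (Fin m) ℝ) :
    Measure (Fin m → ℝ) :=
  (Measure.pi fun _ : Fin m => (gaussianReal 0 1 : Measure ℝ)).map A.mulVec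

/-- Type-I error `α̃_m(Σ, r, c)` of the generalized-mean test when the Gaussian
vector is realized as `A Z` (with `A Aᵀ = Σ`). -/
noncomputable def alphaTilde (m : ℕ) (A : Matrix (Fin m) (Fin m) ℝ) (r c : ℝ) : ENNReal :=
  gaussianVec m A {x : Fin m → ℝ |
    ((1 / m : ℝ) * ∑ i : Fin m, Phi (-(x i)) ^ r) ^ (1 / r) ≤ c}

/-- The class `M_m` of correlation matrices with off-diagonal entries in `[-1/m, 1]`. -/
def corrSet (m : ℕ) : Set (Matrix (Fin m) (Fin m) ℝ) :=
  {Sig | Sig.PosSemidef ∧ (∀ i, Sig i i = 1) ∧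
    ∀ i j, i ≠ j → Sig i j ∈ Set.Icc (-(1:ℝ) / m) 1}

/-- The subclass `M_m^E` of equicorrelation matrices. -/
def equiSet (m : ℕ) : Set (Matrix (Fin m) (Fin m) ℝ) :=
  {Sig | Sig ∈ corrSet m ∧ ∃ ρ : ℝ, ∀ i j, i ≠ j → Sig i j = ρ}

open Real Set Filter Matrix

lemma Phi_eq_integral (x : ℝ) : Phi x = ∫ t in Iic x, gaussianPDFReal 0 1 t := by
  rw [Phi, gaussianReal_apply_eq_integral 0 one_ne_zero, ENNReal.toReal_ofReal]
  exact setIntegral_nonneg measurableSet_Iic fun t _ => gaussianPDFReal_nonneg 0 1 t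

lemma hasDerivAt_Phi (x : ℝ) : HasDerivAt Phi (gaussianPDFReal 0 1 x) x := by
  have hint : Integrable (gaussianPDFReal 0 1) := integrable_gaussianPDFReal 0 1
  have hcont : Continuous (gaussianPDFReal 0 1) := by
    unfold gaussianPDFReal; fun_prop
  have hPhi : Phi = fun u => Phi 0 + ∫ t in (0 : ℝ)..u, gaussianPDFReal 0 1 t := by
    funext u
    rw [Phi_eq_integral, Phi_eq_integral,
      ← intervalIntegral.integral_Iic_sub_Iic hint.integrableOn hint.integrableOn]
    ring
  rw [hPhi]
  exact ((intervalIntegral.integral_hasStrictDerivAt_right hint.intervalIntegrable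
    (hcont.stronglyMeasurableAtFilter _ _) hcont.continuousAt).hasDerivAt).const_add _

lemma continuous_Phi : Continuous Phi :=
  continuous_iff_continuousAt.2 fun x => (hasDerivAt_Phi x).continuousAt

lemma strictMono_Phi : StrictMono Phi :=
  strictMono_of_hasDerivAt_pos hasDerivAt_Phi fun x => gaussianPDFReal_pos 0 1 x one_ne_zero

lemma Phi_nonneg (x : ℝ) : 0 ≤ Phi x := ENNReal.toReal_nonneg

lemma gaussianReal_Ici (x : ℝ) : gaussianReal 0 1 (Ici x) = ENNReal.ofReal (Phi (-x)) := by
  have hsymm : (gaussianReal 0 1).map (fun y => -y) = gaussianReal 0 1 := by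
    simpa using gaussianReal_map_neg (μ := 0) (v := 1)
  rw [Phi, ENNReal.ofReal_toReal (measure_ne_top _ _)]
  conv_rhs => rw [← hsymm]
  rw [Measure.map_apply measurable_neg measurableSet_Iic]
  congr 1
  ext y
  simp

lemma Phi_neg (x : ℝ) : Phi (-x) = 1 - Phi x := by
  have := nullSingletonClass_gaussianReal (μ := 0) one_ne_zero
  rw [show Phi x = (gaussianReal 0 1).real (Iic x) from rfl,
    ← probReal_compl_eq_one_sub measurableSet_Iic, compl_Iic, measureReal_def,
    measure_congr (Ioi_ae_eq_Ici' (measure_singleton x)), gaussianReal_Ici,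
    ENNReal.toReal_ofReal (Phi_nonneg _)]

lemma Phi_zero : Phi 0 = 1 / 2 := by
  have h := Phi_neg 0
  rw [neg_zero] at h
  linarith

lemma exists_pos_Phi_neg_eq {c : ℝ} (hc0 : 0 < c) (hc : c < 1 / 2) :
    ∃ q, 0 < q ∧ Phi (-q) = c := by
  have hbot : Tendsto Phi atBot (nhds 0) := by
    convert tendsto_cdf_atBot (gaussianReal 0 1) using 1
    exact funext fun x => (cdf_eq_real _ x).symm
  obtain ⟨b, hb⟩ := eventually_atBot.1 (hbot.eventually (gt_mem_nhds hc0))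
  obtain ⟨y, ⟨-, hy0⟩, hy⟩ := intermediate_value_Icc (min_le_right b 0)
    continuous_Phi.continuousOn ⟨(hb _ (min_le_left _ _)).le, Phi_zero ▸ hc.le⟩
  have hy0' : y ≠ 0 := by
    rintro rfl
    rw [Phi_zero] at hy
    linarith
  exact ⟨-y, neg_pos.2 (hy0.lt_of_ne hy0'), by rwa [neg_neg]⟩

lemma convexOn_Phi_neg : ConvexOn ℝ (Ici 0) fun x => Phi (-x) := by
  have hderiv (x : ℝ) : HasDerivAt (fun u => Phi (-u)) (-gaussianPDFReal 0 1 (-x)) x := by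
    simpa [Function.comp_def] using (hasDerivAt_Phi (-x)).comp x (hasDerivAt_neg x)
  refine MonotoneOn.convexOn_of_deriv (convex_Ici 0)
    (continuous_Phi.comp continuous_neg).continuousOn
    (fun x _ => (hderiv x).differentiableAt.differentiableWithinAt) ?_
  rw [interior_Ici]
  intro x (hx : 0 < x) y _ hxy
  simp only [(hderiv _).deriv, neg_le_neg_iff, gaussianPDFReal]
  gcongr _ * rexp ?_
  simp only [NNReal.coe_one, sub_zero, neg_sq]
  gcongr

lemma gaussianReal_Ici_le_of_le_one {v : NNReal} (hv : v ≤ 1) {q : ℝ} (hq : 0 < q) :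
    gaussianReal 0 v (Ici q) ≤ gaussianReal 0 1 (Ici q) := by
  have hmap : gaussianReal 0 v = (gaussianReal 0 1).map (fun x => √v * x) := by
    rw [gaussianReal_map_const_mul]
    congr 1
    · simp
    · ext; simp
  rw [hmap, Measure.map_apply (measurable_const_mul _) measurableSet_Ici]
  refine measure_mono fun x (hx : q ≤ √v * x) => ?_
  have hsqrt : √v ≤ 1 := Real.sqrt_le_one.2 (by exact_mod_cast hv)
  have hx0 : 0 < x := pos_of_mul_pos_right (hq.trans_le hx) (Real.sqrt_nonneg _)
  exact hx.trans (by nlinarith : √v * x ≤ x)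

noncomputable def genMean {m : ℕ} (r : ℝ) (p : Fin m → ℝ) : ℝ :=
  ((1 / m : ℝ) * ∑ i, p i ^ r) ^ (1 / r)

lemma mean_le_genMean {m : ℕ} {r : ℝ} (hr : 1 ≤ r) (hm : m ≠ 0) {p : Fin m → ℝ}
    (hp : ∀ i, 0 ≤ p i) : (1 / m : ℝ) * ∑ i, p i ≤ genMean r p := by
  have h := Real.arith_mean_le_rpow_mean (s := Finset.univ) (fun _ => (1 / m : ℝ)) p
    (fun _ _ => by positivity) (by simp [hm]) (fun i _ => hp i) hr
  simpa [genMean, Finset.mul_sum] using h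

lemma genMean_const {m : ℕ} {r : ℝ} (hr : r ≠ 0) (hm : m ≠ 0) {a : ℝ} (ha : 0 ≤ a) :
    genMean r (fun _ : Fin m => a) = a := by
  simp [genMean, hm, one_div, Real.rpow_rpow_inv ha hr]

lemma le_mean_of_genMean_Phi_neg_le {m : ℕ} {r c q : ℝ} (hr : 1 ≤ r) (hm : m ≠ 0)
    (hmc : m * c < 1 / 2) (hq : Phi (-q) = c) {x : Fin m → ℝ}
    (hx : genMean r (fun i => Phi (-x i)) ≤ c) : q ≤ (1 / m : ℝ) * ∑ i, x i := by
  have hm' : (0 : ℝ) < m := by positivity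
  have hmean : (1 / m : ℝ) * ∑ i, Phi (-x i) ≤ c :=
    (mean_le_genMean hr hm fun i => Phi_nonneg _).trans hx
  have hx_nonneg (i : Fin m) : x i ∈ Ici 0 := by
    have hi : Phi (-x i) ≤ ∑ k, Phi (-x k) :=
      Finset.single_le_sum (f := fun k => Phi (-x k)) (fun k _ => Phi_nonneg _) (Finset.mem_univ i)
    rw [one_div, inv_mul_le_iff₀ hm'] at hmean
    have : Phi (-x i) < Phi 0 := by rw [Phi_zero]; linarith
    exact neg_nonpos.1 (strictMono_Phi.lt_iff_lt.1 this).le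
  have hjensen := convexOn_Phi_neg.map_sum_le (t := Finset.univ) (w := fun _ => (1 / m : ℝ))
    (p := x) (fun _ _ => by positivity) (by simp [hm]) (fun i _ => hx_nonneg i)
  simp only [smul_eq_mul, ← Finset.mul_sum] at hjensen
  exact neg_le_neg_iff.1 (strictMono_Phi.le_iff_le.1 (hq ▸ hjensen.trans hmean))

lemma map_pi_gaussianReal_dotProduct {ι : Type*} [Fintype ι] (w : ι → ℝ) :
    (Measure.pi fun _ : ι => gaussianReal 0 1).map (w ⬝ᵥ ·)
      = gaussianReal 0 (w ⬝ᵥ w).toNNReal := by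
  set P := Measure.pi fun _ : ι => gaussianReal 0 1
  have hcoord : HasGaussianLaw (fun z : ι → ℝ => (z ·)) P := by
    refine iIndepFun.hasGaussianLaw (fun i => ⟨?_⟩) ?_
    · rw [(measurePreserving_eval _ i).map_eq]; infer_instance
    · exact iIndepFun_pi (X := fun _ x => x) fun _ => aemeasurable_id
  have hL : HasGaussianLaw (w ⬝ᵥ ·) P :=
    (hcoord.map_fun (∑ i, w i • ContinuousLinearMap.proj i)).congr
      (ae_of_all _ fun z => by simp [dotProduct])
  have hcoord_mean (i : ι) : ∫ z, z i ∂P = 0 := by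
    rw [← integral_id_gaussianReal (μ := 0) (v := 1)]
    exact integral_comp_eval (μ := fun _ : ι => gaussianReal 0 1) (f := fun x => x)
      aestronglyMeasurable_id
  have hsum : (w ⬝ᵥ ·) = ∑ i, fun z : ι → ℝ => w i * z i := by
    ext z; simp [dotProduct]
  rw [hL.map_eq_gaussianReal]
  congr
  · simp only [dotProduct]
    rw [integral_finsetSum _ fun i _ => (hcoord.integrable.eval i).const_mul (w i)]
    simp [integral_const_mul, hcoord_mean]
  · rw [hsum, variance_sum_pi (X := fun i x => w i * x)]
    · refine Finset.sum_congr rfl fun i _ => ?_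
      rw [variance_const_mul (w i) (fun x => x), variance_fun_id_gaussianReal]
      simp [pow_two]
    · exact fun i => (memLp_id_gaussianReal 2).const_mul (w i)

lemma gaussianVec_map_dotProduct (m : ℕ) (A : Matrix (Fin m) (Fin m) ℝ) (w : Fin m → ℝ) :
    (gaussianVec m A).map (w ⬝ᵥ ·) = gaussianReal 0 (w ⬝ᵥ (A * Aᵀ) *ᵥ w).toNNReal := by
  rw [gaussianVec, Measure.map_map (by fun_prop) (by fun_prop)]
  have : (w ⬝ᵥ ·) ∘ A.mulVec = ((w ᵥ* A) ⬝ᵥ ·) :=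
    funext fun z => dotProduct_mulVec w A z
  rw [this, map_pi_gaussianReal_dotProduct, ← mulVec_mulVec, dotProduct_mulVec, mulVec_transpose]

lemma gaussianVec_map_mean (m : ℕ) (A : Matrix (Fin m) (Fin m) ℝ) :
    (gaussianVec m A).map (fun x => (1 / m : ℝ) * ∑ i, x i)
      = gaussianReal 0 ((1 / m : ℝ) ^ 2 * ∑ i, ∑ k, (A * Aᵀ) i k).toNNReal := by
  have hmean :
      (fun x : Fin m → ℝ => (1 / m : ℝ) * ∑ i, x i) = ((1 / m : ℝ) • 1 ⬝ᵥ ·) := by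
    ext x; simp [smul_dotProduct, one_dotProduct]
  rw [hmean, gaussianVec_map_dotProduct]
  congr 2
  simp only [dotProduct, mulVec, Finset.mul_sum, Pi.smul_apply, Pi.one_apply, smul_eq_mul]
  exact Finset.sum_congr rfl fun i _ => Finset.sum_congr rfl fun k _ => by ring

lemma Matrix.row_eq_of_mul_transpose_apply_eq {n p : Type*} [Fintype p]
    {A : Matrix n p ℝ} {i k : n} (hi : (A * Aᵀ) i i = (A * Aᵀ) i k)
    (hk : (A * Aᵀ) k k = (A * Aᵀ) i k) : A i = A k := by
  have hgram (a b : n) : (A * Aᵀ) a b = A a ⬝ᵥ A b := rfl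
  refine sub_eq_zero.1 (dotProduct_self_eq_zero.1 ?_)
  simp only [hgram] at hi hk
  rw [sub_dotProduct, dotProduct_sub, dotProduct_sub, dotProduct_comm (A k) (A i), hi, hk]
  ring

theorem alphaTilde_le {m : ℕ} {r c q : ℝ} (hr : 1 ≤ r) (hm : m ≠ 0) (hmc : m * c < 1 / 2)
    (hq0 : 0 < q) (hq : Phi (-q) = c) (A : Matrix (Fin m) (Fin m) ℝ)
    (hA : ∀ i k, (A * Aᵀ) i k ≤ 1) : alphaTilde m A r c ≤ ENNReal.ofReal c := by
  have hvar : (1 / m : ℝ) ^ 2 * ∑ i, ∑ k, (A * Aᵀ) i k ≤ 1 := by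
    have hsum : ∑ i, ∑ k, (A * Aᵀ) i k ≤ m * m :=
      calc ∑ i, ∑ k, (A * Aᵀ) i k ≤ ∑ _i : Fin m, ∑ _k : Fin m, (1 : ℝ) :=
            Finset.sum_le_sum fun i _ => Finset.sum_le_sum fun k _ => hA i k
        _ = m * m := by simp
    calc (1 / m : ℝ) ^ 2 * ∑ i, ∑ k, (A * Aᵀ) i k ≤ (1 / m : ℝ) ^ 2 * (m * m) := by
          gcongr
      _ = 1 := by field_simp
  calc alphaTilde m A r c ≤ gaussianVec m A {x | q ≤ (1 / m : ℝ) * ∑ i, x i} :=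
        measure_mono fun x hx => le_mean_of_genMean_Phi_neg_le hr hm hmc hq hx
    _ = gaussianReal 0 ((1 / m : ℝ) ^ 2 * ∑ i, ∑ k, (A * Aᵀ) i k).toNNReal (Ici q) := by
        rw [← gaussianVec_map_mean, Measure.map_apply (by fun_prop) measurableSet_Ici]
        rfl
    _ ≤ gaussianReal 0 1 (Ici q) :=
        gaussianReal_Ici_le_of_le_one (Real.toNNReal_le_one.2 hvar) hq0
    _ = ENNReal.ofReal c := by rw [gaussianReal_Ici, hq]

theorem alphaTilde_eq_of_mul_transpose_eq_ones {m : ℕ} {r c q : ℝ} (hr : 1 ≤ r) (hm : m ≠ 0)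
    (hmc : m * c < 1 / 2) (hq0 : 0 < q) (hq : Phi (-q) = c) (A : Matrix (Fin m) (Fin m) ℝ)
    (hA : A * Aᵀ = of fun _ _ => 1) : alphaTilde m A r c = ENNReal.ofReal c := by
  refine le_antisymm (alphaTilde_le hr hm hmc hq0 hq A (by simp [hA])) ?_
  set mean : (Fin m → ℝ) → ℝ := fun x => (1 / m : ℝ) * ∑ i, x i
  have hvar : ((1 / m : ℝ) ^ 2 * ∑ i, ∑ k, (A * Aᵀ) i k).toNNReal = 1 := by
    simp only [hA, of_apply, Finset.sum_const, Finset.card_univ, Fintype.card_fin, nsmul_eq_mul,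
      mul_one, toNNReal_eq_one]
    field_simp
  have hmean_meas : Measurable mean := by fun_prop
  have hrow (i k : Fin m) : A i = A k :=
    Matrix.row_eq_of_mul_transpose_apply_eq (by simp [hA]) (by simp [hA])
  calc ENNReal.ofReal c = gaussianVec m A (mean ⁻¹' Ici q) := by
        rw [← Measure.map_apply hmean_meas measurableSet_Ici, gaussianVec_map_mean, hvar,
          gaussianReal_Ici, hq]
    _ = Measure.pi (fun _ => gaussianReal 0 1) (A.mulVec ⁻¹' (mean ⁻¹' Ici q)) :=
        Measure.map_apply (by fun_prop) (hmean_meas measurableSet_Ici)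
    _ ≤ Measure.pi (fun _ => gaussianReal 0 1)
          (A.mulVec ⁻¹' {x | genMean r (fun i => Phi (-x i)) ≤ c}) := by
        refine measure_mono fun z (hz : q ≤ mean (A *ᵥ z)) => ?_
        have hconst (i : Fin m) : (A *ᵥ z) i = mean (A *ᵥ z) := by
          have hcoord (k : Fin m) : (A *ᵥ z) k = (A *ᵥ z) i := congrArg (· ⬝ᵥ z) (hrow k i)
          simp only [mean, hcoord, Finset.sum_const, Finset.card_univ, Fintype.card_fin,
            nsmul_eq_mul]
          field_simp
        show genMean r (fun i => Phi (-(A *ᵥ z) i)) ≤ c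
        simp only [hconst]
        rw [genMean_const (by linarith) hm (Phi_nonneg _), ← hq]
        exact strictMono_Phi.monotone (neg_le_neg hz)
    _ ≤ alphaTilde m A r c := Measure.le_map_apply (by fun_prop) _

lemma ones_mem_equiSet (m : ℕ) : (of fun _ _ => (1 : ℝ)) ∈ equiSet m := by
  have hones :
      (of fun _ _ => (1 : ℝ)) = vecMulVec (1 : Fin m → ℝ) (star (1 : Fin m → ℝ)) := by
    ext i j
    simp [vecMulVec_apply]
  refine ⟨⟨hones ▸ posSemidef_vecMulVec_self_star 1, fun _ => rfl,
    fun _ _ _ => ⟨?_, le_rfl⟩⟩, 1, fun _ _ _ => rfl⟩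
  exact (div_nonpos_of_nonpos_of_nonneg (by norm_num) (Nat.cast_nonneg m)).trans zero_le_one

theorem sSup_alphaTilde_eq {m : ℕ} {r c q : ℝ} (hr : 1 ≤ r) (hm : m ≠ 0)
    (hmc : m * c < 1 / 2) (hq0 : 0 < q) (hq : Phi (-q) = c)
    {S : Set (Matrix (Fin m) (Fin m) ℝ)} (hS : S ⊆ corrSet m) (hones : of (fun _ _ => 1) ∈ S)
    {Aone : Matrix (Fin m) (Fin m) ℝ} (hAone : Aone * Aoneᵀ = of fun _ _ => 1) :
    sSup {x : ENNReal | ∃ Sig ∈ S, ∃ A : Matrix (Fin m) (Fin m) ℝ,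
      A * Aᵀ = Sig ∧ x = alphaTilde m A r c} = alphaTilde m Aone r c := by
  refine IsGreatest.csSup_eq ⟨⟨_, hones, Aone, hAone, rfl⟩, ?_⟩
  rintro _ ⟨Sig, hSig, A, rfl, rfl⟩
  rw [alphaTilde_eq_of_mul_transpose_eq_ones hr hm hmc hq0 hq Aone hAone]
  refine alphaTilde_le hr hm hmc hq0 hq A fun i k => ?_
  obtain ⟨-, hdiag, hoff⟩ := hS hSig
  rcases eq_or_ne i k with rfl | hik
  · exact (hdiag i).le
  · exact (hoff i k hik).2

theorem stmt_6_general (m : ℕ) (r c : ℝ) (hr : 1 ≤ r)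
    (hc0 : 0 < c) (hc : c < 1 / (2 * m))
    (Aone : Matrix (Fin m) (Fin m) ℝ)
    (hAone : Aone * Aone.transpose = Matrix.of fun _ _ => (1 : ℝ)) :
    sSup {x : ENNReal | ∃ Sig ∈ corrSet m, ∃ A : Matrix (Fin m) (Fin m) ℝ,
        A * A.transpose = Sig ∧ x = alphaTilde m A r c}
      = alphaTilde m Aone r c ∧
    sSup {x : ENNReal | ∃ Sig ∈ equiSet m, ∃ A : Matrix (Fin m) (Fin m) ℝ,
        A * A.transpose = Sig ∧ x = alphaTilde m A r c}
      = alphaTilde m Aone r c := by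
  have hm : m ≠ 0 := by
    rintro rfl
    rw [Nat.cast_zero, mul_zero, div_zero] at hc
    linarith
  have hmc : m * c < 1 / 2 := by
    rw [lt_div_iff₀ (by positivity)] at hc
    linarith
  have hc2 : c < 1 / 2 :=
    (le_mul_of_one_le_left hc0.le (Nat.one_le_cast.2 (Nat.one_le_iff_ne_zero.2 hm))).trans_lt hmc
  obtain ⟨q, hq0, hq⟩ := exists_pos_Phi_neg_eq hc0 hc2
  exact ⟨sSup_alphaTilde_eq hr hm hmc hq0 hq subset_rfl (ones_mem_equiSet m).1 hAone,
    sSup_alphaTilde_eq hr hm hmc hq0 hq (fun _ h => h.1) (ones_mem_equiSet m) hAone⟩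

/-- for `r ≥ 1` and `0 < c < 1/(2m)`, the worst-case type-I error of the
generalized-mean test over `M_m` equals that over `M_m^E`, and both are attained at
perfect correlation `Σ = 1ₘ1ₘᵀ`. -/
theorem stmt_6 (m : ℕ) (hm : 1 ≤ m) (r c : ℝ) (hr : 1 ≤ r)
    (hc0 : 0 < c) (hc : c < 1 / (2 * m))
    (Aone : Matrix (Fin m) (Fin m) ℝ)
    (hAone : Aone * Aone.transpose = Matrix.of fun _ _ => (1 : ℝ)) :
    sSup {x : ENNReal | ∃ Sig ∈ corrSet m, ∃ A : Matrix (Fin m) (Fin m) ℝ,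
        A * A.transpose = Sig ∧ x = alphaTilde m A r c}
      = alphaTilde m Aone r c ∧
    sSup {x : ENNReal | ∃ Sig ∈ equiSet m, ∃ A : Matrix (Fin m) (Fin m) ℝ,
        A * A.transpose = Sig ∧ x = alphaTilde m A r c}
      = alphaTilde m Aone r c :=
  stmt_6_general m r c hr hc0 hc Aone hAone
end

section
/- Fix r ≤ −1, ρ ∈ [0,1], α > 0, c > 0, and π ∈ (0,1] with π_m → π; assume √c > 1 − √(1−ρ). Set μ_m = √(2c·log m). For each m, let Z_0, Z_1, …, Z_m be i.i.d. standard normal, let B_{m1}, …, B_{mm} be i.i.d. Bernoulli(π_m) independent of the Z's, and set p_{mi} = Φ(−μ_m·B_{mi} − √ρ·Z_0 − √(1−ρ)·Z_i). Let the rejection threshold be c_m = α·m^{1/|r| − 1} if r < −1 and c_m = α/(1 + α·log m) if r = −1. Then lim_{m→∞} Pr( ((1/m) Σ_{i=1}^m p_{mi}^r)^{1/r} ≤ c_m ) = 1. -/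
open MeasureTheory ProbabilityTheory Filter

/-- Bernoulli(π) law on `ℝ` (mass `π` at `1`, mass `1-π` at `0`). -/
noncomputable def bern (p : ℝ) : Measure ℝ :=
  ENNReal.ofReal p • Measure.dirac (1:ℝ) + ENNReal.ofReal (1 - p) • Measure.dirac (0:ℝ)

/-- Joint law at stage `m` of the equicorrelated Gaussian model: `m+1` i.i.d. standard
normals `Z₀,…,Z_m` together with `m` i.i.d. Bernoulli(π) signal indicators. -/
noncomputable def model (m : ℕ) (πp : ℝ) :
    Measure ((Fin (m + 1) → ℝ) × (Fin m → ℝ)) :=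
  (Measure.pi fun _ : Fin (m + 1) => (gaussianReal 0 1 : Measure ℝ)).prod
    (Measure.pi fun _ : Fin m => bern πp)

/-- The p-value `p_{mi} = Φ(-μ B_{mi} - √ρ Z₀ - √(1-ρ) Z_i)`. -/
noncomputable def pval (m : ℕ) (μs ρ : ℝ)
    (ω : (Fin (m + 1) → ℝ) × (Fin m → ℝ)) (i : Fin m) : ℝ :=
  Phi (-(μs * ω.2 i) - Real.sqrt ρ * ω.1 0 - Real.sqrt (1 - ρ) * ω.1 i.succ)

/-- Asymptotic calibration `c_m` of the generalized-mean test of level `α` for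
`r ≤ -1`: `c_m = α/(1 + α log m)` if `r = -1` and `c_m = α m^{1/|r| - 1}` if `r < -1`. -/
noncomputable def cal (r α : ℝ) (m : ℕ) : ℝ :=
  if r = -1 then α / (1 + α * Real.log m) else α * (m : ℝ) ^ (1 / |r| - 1)

/-! Choose `0 ≤ a < 1` and `δ > 0` with `√c + a√(1-ρ) = 1 + 2δ`. If `Z₀ > -δ√(2 log m)` and some
signal coordinate (`B_j = 1`) has `Z_j ≥ a√(2 log m)`, then
`p_j ≤ Φ(-(1+δ)√(2 log m)) ≤ m^{-(1+δ)²} ≤ m^{1/r} c_m`, and a single p-value that small already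
pushes the generalized mean below `c_m`. The first condition fails with probability
`Φ(-δ√(2 log m)) → 0`; the second fails with probability
`(1 - π_m P(Z ≥ a√(2 log m)))^m ≤ exp(-m π_m P(Z ≥ a√(2 log m)))`, which tends to `0` because
`m P(Z ≥ a√(2 log m)) ≥ m^{1 - a² + o(1)} → ∞`. -/

section GaussianTail

open Real Set

lemma gaussianPDFReal_zero_one (x : ℝ) :
    gaussianPDFReal 0 1 x = (√(2 * π))⁻¹ * exp (-x ^ 2 / 2) := by
  simp [gaussianPDFReal]

lemma gaussianReal_real_eq_setIntegral (s : Set ℝ) :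
    (gaussianReal 0 1).real s = ∫ x in s, gaussianPDFReal 0 1 x := by
  rw [measureReal_def, gaussianReal_apply_eq_integral 0 one_ne_zero,
    ENNReal.toReal_ofReal (integral_nonneg fun x => gaussianPDFReal_nonneg 0 1 x)]

lemma Phi_mono : Monotone Phi := fun _ _ h =>
  measureReal_mono (Iic_subset_Iic.2 h)

lemma Phi_neg_le_exp {x : ℝ} (hx : 1 ≤ x) : Phi (-x) ≤ exp (-x ^ 2 / 2) := by
  set C := (√(2 * π))⁻¹ * exp (-x ^ 2 / 2) * exp x
  -- for `t ≤ -x ≤ -1` one has `-t²/2 ≤ -x²/2 + x + t`, so the density is dominated by `C eᵗ`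
  have hdom : ∀ t ∈ Iic (-x), gaussianPDFReal 0 1 t ≤ C * exp t := by
    intro t ht
    rw [gaussianPDFReal_zero_one, mul_assoc, mul_assoc, ← exp_add, ← exp_add]
    gcongr
    nlinarith [mul_nonneg (neg_nonneg.2 (show t + x ≤ 0 by linarith [mem_Iic.1 ht]))
      (show (0 : ℝ) ≤ -(t - x + 2) by linarith [mem_Iic.1 ht])]
  have hinv : (√(2 * π))⁻¹ ≤ 1 :=
    inv_le_one_of_one_le₀ (one_le_sqrt.2 (by nlinarith [pi_gt_three]))
  calc Phi (-x) = ∫ t in Iic (-x), gaussianPDFReal 0 1 t := gaussianReal_real_eq_setIntegral _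
    _ ≤ ∫ t in Iic (-x), C * exp t :=
        setIntegral_mono_on (integrable_gaussianPDFReal 0 1).integrableOn
          ((integrableOn_exp_Iic (-x)).const_mul C) measurableSet_Iic hdom
    _ = (√(2 * π))⁻¹ * exp (-x ^ 2 / 2) := by
        rw [integral_const_mul, integral_exp_Iic, mul_assoc, ← exp_add, add_neg_cancel,
          exp_zero, mul_one]
    _ ≤ exp (-x ^ 2 / 2) := mul_le_of_le_one_left (exp_nonneg _) hinv

lemma gaussianPDFReal_le_gaussianReal_real_Icc {u w : ℝ}
    (hw : ∀ t ∈ Icc u (u + 1), |t| ≤ w) :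
    gaussianPDFReal 0 1 w ≤ (gaussianReal 0 1).real (Icc u (u + 1)) := by
  have hle : ∀ t ∈ Icc u (u + 1), gaussianPDFReal 0 1 w ≤ gaussianPDFReal 0 1 t := by
    intro t ht
    rw [gaussianPDFReal_zero_one, gaussianPDFReal_zero_one]
    have := abs_le.1 (hw t ht)
    gcongr ?_ * exp ?_
    nlinarith
  calc gaussianPDFReal 0 1 w = ∫ _ in Icc u (u + 1), gaussianPDFReal 0 1 w := by simp
    _ ≤ ∫ t in Icc u (u + 1), gaussianPDFReal 0 1 t :=
        setIntegral_mono_on (integrableOn_const measure_Icc_lt_top.ne)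
          (integrable_gaussianPDFReal 0 1).integrableOn measurableSet_Icc hle
    _ = (gaussianReal 0 1).real (Icc u (u + 1)) := (gaussianReal_real_eq_setIntegral _).symm

lemma Phi_pos (x : ℝ) : 0 < Phi x := by
  have hw : ∀ t ∈ Icc (x - 1) (x - 1 + 1), |t| ≤ |x| + 1 := fun t ht =>
    abs_le.2 ⟨by linarith [neg_abs_le x, ht.1], by linarith [le_abs_self x, ht.2]⟩
  refine (gaussianPDFReal_pos 0 1 _ one_ne_zero).trans_le
    ((gaussianPDFReal_le_gaussianReal_real_Icc hw).trans (measureReal_mono ?_))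
  exact Icc_subset_Iic_self.trans (Iic_subset_Iic.2 (by linarith))

lemma gaussianPDFReal_le_gaussianReal_real_Ici {L : ℝ} (hL : 0 ≤ L) :
    gaussianPDFReal 0 1 (L + 1) ≤ (gaussianReal 0 1).real (Ici L) := by
  have hw : ∀ t ∈ Icc L (L + 1), |t| ≤ L + 1 := fun t ht =>
    abs_le.2 ⟨by linarith [ht.1], ht.2⟩
  exact (gaussianPDFReal_le_gaussianReal_real_Icc hw).trans (measureReal_mono Icc_subset_Ici_self)

lemma Phi_neg_mul_sqrt_two_log_le {t x : ℝ} (ht : 0 < t) (hx : 1 ≤ x)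
    (hs : 1 ≤ √(2 * log t)) : Phi (-(x * √(2 * log t))) ≤ t ^ (-x ^ 2) := by
  have hlog : 0 ≤ 2 * log t := by
    by_contra h
    rw [sqrt_eq_zero'.2 (not_le.1 h).le] at hs
    norm_num at hs
  calc Phi (-(x * √(2 * log t))) ≤ exp (-(x * √(2 * log t)) ^ 2 / 2) :=
        Phi_neg_le_exp (one_le_mul_of_one_le_of_one_le hx hs)
    _ = t ^ (-x ^ 2) := by
        rw [rpow_def_of_pos ht, mul_pow, sq_sqrt hlog]
        ring_nf

end GaussianTail

section Calibration

open Real Topology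

lemma rpow_mean_rpow_inv_le_of_le {ι : Type*} [Fintype ι] {r c : ℝ} (hr : r < 0) (hc : 0 < c)
    {p : ι → ℝ} (hp : ∀ i, 0 < p i) {j : ι}
    (hj : p j ≤ (Fintype.card ι : ℝ) ^ (1 / r) * c) :
    ((1 / Fintype.card ι : ℝ) * ∑ i, p i ^ r) ^ (1 / r) ≤ c := by
  set n : ℝ := (Fintype.card ι : ℝ)
  have hn : 0 < n := Nat.cast_pos.2 (Fintype.card_pos_iff.2 ⟨j⟩)
  have hcr : n * c ^ r ≤ ∑ i, p i ^ r :=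
    calc n * c ^ r = (n ^ (1 / r) * c) ^ r := by
          rw [mul_rpow (rpow_nonneg hn.le _) hc.le, ← rpow_mul hn.le, one_div_mul_cancel hr.ne,
            rpow_one]
      _ ≤ p j ^ r := rpow_le_rpow_of_nonpos (hp j) hj hr.le
      _ ≤ ∑ i, p i ^ r :=
          Finset.single_le_sum (fun i _ => (rpow_pos_of_pos (hp i) r).le) (Finset.mem_univ j)
  have hmean : c ^ r ≤ (1 / n) * ∑ i, p i ^ r := by
    rw [one_div_mul_eq_div, le_div_iff₀ hn]
    linarith
  calc ((1 / n) * ∑ i, p i ^ r) ^ (1 / r) ≤ (c ^ r) ^ (1 / r) :=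
        rpow_le_rpow_of_nonpos (rpow_pos_of_pos hc r) hmean (one_div_neg.2 hr).le
    _ = c := by rw [← rpow_mul hc.le, mul_one_div_cancel hr.ne, rpow_one]

lemma cal_pos {r α : ℝ} (hα : 0 < α) {m : ℕ} (hm : 0 < m) : 0 < cal r α m := by
  have hlog : 0 ≤ log m := log_natCast_nonneg m
  unfold cal
  split
  · positivity
  · exact mul_pos hα (rpow_pos_of_pos (Nat.cast_pos.2 hm) _)

lemma rpow_neg_one_mul_div_le_rpow_inv_mul_cal {r α : ℝ} (hr : r ≤ -1) (hα : 0 < α) {m : ℕ}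
    (hm : 0 < m) : (m : ℝ) ^ (-1 : ℝ) * (α / (1 + α * log m)) ≤ (m : ℝ) ^ (1 / r) * cal r α m := by
  have hm' : (0 : ℝ) < m := Nat.cast_pos.2 hm
  by_cases hr1 : r = -1
  · subst hr1
    norm_num [cal]
  · have habs : |r| = -r := abs_of_neg (by linarith)
    have hexp : (m : ℝ) ^ (1 / r) * cal r α m = α * (m : ℝ) ^ (-1 : ℝ) := by
      rw [cal, if_neg hr1, habs, mul_left_comm, ← rpow_add hm']
      ring_nf
    rw [hexp, mul_comm α ((m : ℝ) ^ (-1 : ℝ))]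
    exact mul_le_mul_of_nonneg_left
      (div_le_self hα.le (le_add_of_nonneg_right (mul_nonneg hα.le (log_natCast_nonneg m))))
      (rpow_nonneg hm'.le _)

lemma eventually_rpow_neg_le_div_one_add_mul_log {α γ : ℝ} (hα : 0 < α) (hγ : 0 < γ) :
    ∀ᶠ x : ℝ in atTop, x ^ (-γ) ≤ α / (1 + α * log x) := by
  have hlim : Tendsto (fun x : ℝ => x ^ (-γ) + α * (log x / x ^ γ)) atTop (𝓝 0) := by
    simpa using (tendsto_rpow_neg_atTop hγ).add
      ((isLittleO_log_rpow_atTop hγ).tendsto_div_nhds_zero.const_mul α)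
  filter_upwards [hlim.eventually (gt_mem_nhds hα), eventually_gt_atTop 1] with x hx hx1
  have hlog : 0 < log x := log_pos hx1
  have hxγ : 0 < x ^ γ := rpow_pos_of_pos (by linarith) γ
  rw [rpow_neg (by linarith), le_div_iff₀ (by positivity)]
  rw [rpow_neg (by linarith), mul_div_assoc'] at hx
  field_simp at hx ⊢
  linarith

lemma eventually_rpow_neg_le_rpow_inv_mul_cal {r α β : ℝ} (hr : r ≤ -1) (hα : 0 < α)
    (hβ : 1 < β) : ∀ᶠ m : ℕ in atTop, (m : ℝ) ^ (-β) ≤ (m : ℝ) ^ (1 / r) * cal r α m := by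
  filter_upwards [tendsto_natCast_atTop_atTop.eventually
      (eventually_rpow_neg_le_div_one_add_mul_log hα (sub_pos.2 hβ)),
    eventually_gt_atTop 0] with m hm hm0
  calc (m : ℝ) ^ (-β) = (m : ℝ) ^ (-1 : ℝ) * (m : ℝ) ^ (-(β - 1)) := by
        rw [← rpow_add (Nat.cast_pos.2 hm0)]
        ring_nf
    _ ≤ (m : ℝ) ^ (-1 : ℝ) * (α / (1 + α * log m)) := by gcongr
    _ ≤ (m : ℝ) ^ (1 / r) * cal r α m := rpow_neg_one_mul_div_le_rpow_inv_mul_cal hr hα hm0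

end Calibration

section Asymptotics

open Real Set Topology

lemma tendsto_sqrt_two_mul_log_natCast_atTop :
    Tendsto (fun m : ℕ => √(2 * log m)) atTop atTop :=
  tendsto_sqrt_atTop.comp ((tendsto_log_atTop.comp tendsto_natCast_atTop_atTop).const_mul_atTop
    two_pos)

lemma tendsto_one_sub_pow_of_tendsto_mul_atTop {q : ℕ → ℝ} (hq : ∀ m, q m ≤ 1)
    (h : Tendsto (fun m : ℕ => m * q m) atTop atTop) :
    Tendsto (fun m : ℕ => (1 - q m) ^ m) atTop (𝓝 0) := by
  refine squeeze_zero (fun m => pow_nonneg (sub_nonneg.2 (hq m)) m) (fun m => ?_)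
    (tendsto_exp_neg_atTop_nhds_zero.comp h)
  calc (1 - q m) ^ m ≤ exp (-q m) ^ m :=
        pow_le_pow_left₀ (sub_nonneg.2 (hq m)) (one_sub_le_exp_neg _) m
    _ = exp (-(m * q m)) := by rw [← exp_nat_mul]; ring_nf

lemma tendsto_sq_div_two_sub_sq_div_two_atTop {a : ℝ} (ha0 : 0 ≤ a) (ha1 : a < 1) :
    Tendsto (fun s : ℝ => s ^ 2 / 2 - (a * s + 1) ^ 2 / 2) atTop atTop := by
  have hb : 0 < (1 - a ^ 2) / 2 := by nlinarith
  have hlin : Tendsto (fun s : ℝ => (1 - a ^ 2) / 2 * s - a) atTop atTop :=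
    tendsto_atTop_add_const_right _ _ (tendsto_id.const_mul_atTop hb)
  refine tendsto_atTop_add_const_right _ (-1 / 2) (tendsto_id.atTop_mul_atTop₀ hlin) |>.congr ?_
  intro s
  simp only [id]
  ring

lemma tendsto_natCast_mul_gaussianReal_real_Ici {a : ℝ} (ha0 : 0 ≤ a) (ha1 : a < 1) :
    Tendsto (fun m : ℕ => (m : ℝ) * (gaussianReal 0 1).real (Ici (a * √(2 * log m))))
      atTop atTop := by
  have hlow : Tendsto (fun m : ℕ => (√(2 * π))⁻¹ *
      exp ((√(2 * log m)) ^ 2 / 2 - (a * √(2 * log m) + 1) ^ 2 / 2)) atTop atTop :=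
    (tendsto_exp_atTop.comp ((tendsto_sq_div_two_sub_sq_div_two_atTop ha0 ha1).comp
      tendsto_sqrt_two_mul_log_natCast_atTop)).const_mul_atTop
      (by positivity)
  refine tendsto_atTop_mono' _ ?_ hlow
  filter_upwards [eventually_gt_atTop 0] with m hm
  have hm' : (0 : ℝ) < m := Nat.cast_pos.2 hm
  have hL : 0 ≤ a * √(2 * log m) := mul_nonneg ha0 (sqrt_nonneg _)
  calc (√(2 * π))⁻¹ * exp ((√(2 * log m)) ^ 2 / 2 - (a * √(2 * log m) + 1) ^ 2 / 2)
      = m * gaussianPDFReal 0 1 (a * √(2 * log m) + 1) := by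
        rw [gaussianPDFReal_zero_one, exp_sub, sq_sqrt (by positivity),
          show 2 * log m / 2 = log m by ring, exp_log hm', neg_div, exp_neg]
        field_simp
    _ ≤ m * (gaussianReal 0 1).real (Ici (a * √(2 * log m))) :=
        mul_le_mul_of_nonneg_left (gaussianPDFReal_le_gaussianReal_real_Ici hL) hm'.le

end Asymptotics

section Model

open Set Topology

variable {p : ℝ}

lemma isProbabilityMeasure_bern (h0 : 0 ≤ p) (h1 : p ≤ 1) : IsProbabilityMeasure (bern p) := by
  constructor
  simp only [bern, Measure.add_apply, Measure.smul_apply, measure_univ, smul_eq_mul, mul_one]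
  rw [← ENNReal.ofReal_add h0 (by linarith)]
  norm_num

lemma bern_singleton_one : bern p {1} = ENNReal.ofReal p := by
  simp [bern, Measure.dirac_apply' _ (measurableSet_singleton (1 : ℝ))]

lemma isProbabilityMeasure_model (m : ℕ) (h0 : 0 ≤ p) (h1 : p ≤ 1) :
    IsProbabilityMeasure (model m p) :=
  have := isProbabilityMeasure_bern h0 h1
  inferInstanceAs (IsProbabilityMeasure (Measure.prod _ _))

def regroup (m : ℕ) (ω : (Fin (m + 1) → ℝ) × (Fin m → ℝ)) : ℝ × (Fin m → ℝ × ℝ) :=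
  (ω.1 0, fun j => (ω.1 j.succ, ω.2 j))

lemma measurePreserving_regroup (m : ℕ) (h0 : 0 ≤ p) (h1 : p ≤ 1) :
    MeasurePreserving (regroup m) (model m p)
      ((gaussianReal 0 1).prod (Measure.pi fun _ : Fin m => (gaussianReal 0 1).prod (bern p))) := by
  have := isProbabilityMeasure_bern h0 h1
  have hsplit := (measurePreserving_piFinSuccAbove (fun _ : Fin (m + 1) => gaussianReal 0 1) 0).prod
    (MeasurePreserving.id (Measure.pi fun _ : Fin m => bern p))
  have hassoc := measurePreserving_prodAssoc (gaussianReal 0 1)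
    (Measure.pi fun _ : Fin m => gaussianReal 0 1) (Measure.pi fun _ : Fin m => bern p)
  have hzip := (MeasurePreserving.id (gaussianReal 0 1)).prod
    (measurePreserving_arrowProdEquivProdArrow ℝ ℝ (Fin m)
      (fun _ => gaussianReal 0 1) (fun _ => bern p)).symm
  unfold model
  convert (hzip.comp hassoc).comp hsplit using 1
  funext ω
  simp [regroup, MeasurableEquiv.piFinSuccAbove, MeasurableEquiv.arrowProdEquivProdArrow,
    Equiv.arrowProdEquivProdArrow, MeasurableEquiv.prodAssoc, Equiv.prodAssoc, Fin.tail]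

variable {m : ℕ}

lemma model_coord_zero_le (h0 : 0 ≤ p) (h1 : p ≤ 1) (K : ℝ) :
    model m p {ω | ω.1 0 ≤ K} = gaussianReal 0 1 (Iic K) := by
  have := isProbabilityMeasure_bern h0 h1
  have hset : {ω : (Fin (m + 1) → ℝ) × (Fin m → ℝ) | ω.1 0 ≤ K} = regroup m ⁻¹' (Iic K ×ˢ univ) :=
    by ext; simp [regroup]
  rw [hset, (measurePreserving_regroup m h0 h1).measure_preimage
    (measurableSet_Iic.prod MeasurableSet.univ).nullMeasurableSet, Measure.prod_prod,
    measure_univ, mul_one]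

lemma model_no_strong_signal (h0 : 0 ≤ p) (h1 : p ≤ 1) (L : ℝ) :
    model m p {ω | ∀ j, ¬(L ≤ ω.1 j.succ ∧ ω.2 j = 1)}
      = ENNReal.ofReal ((1 - (gaussianReal 0 1).real (Ici L) * p) ^ m) := by
  have := isProbabilityMeasure_bern h0 h1
  set C : Set (ℝ × ℝ) := (Ici L ×ˢ {1})ᶜ
  have hC : MeasurableSet C := (measurableSet_Ici.prod (measurableSet_singleton _)).compl
  have hset : {ω : (Fin (m + 1) → ℝ) × (Fin m → ℝ) | ∀ j, ¬(L ≤ ω.1 j.succ ∧ ω.2 j = 1)}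
      = regroup m ⁻¹' (univ ×ˢ univ.pi fun _ => C) := by
    ext; simp [regroup, C]
  have hq : (gaussianReal 0 1).real (Ici L) * p ≤ 1 :=
    mul_le_one₀ measureReal_le_one h0 h1
  have hCprob : ((gaussianReal 0 1).prod (bern p)) C
      = ENNReal.ofReal (1 - (gaussianReal 0 1).real (Ici L) * p) := by
    rw [measure_compl (measurableSet_Ici.prod (measurableSet_singleton _)) (measure_ne_top _ _),
      measure_univ, Measure.prod_prod, bern_singleton_one, ENNReal.ofReal_sub _
      (mul_nonneg measureReal_nonneg h0), ENNReal.ofReal_one, ENNReal.ofReal_mul measureReal_nonneg,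
      ofReal_measureReal]
  rw [hset, (measurePreserving_regroup m h0 h1).measure_preimage
    (MeasurableSet.univ.prod (MeasurableSet.univ_pi fun _ => hC)).nullMeasurableSet,
    Measure.prod_prod, measure_univ, one_mul, Measure.pi_pi, hCprob, Finset.prod_const,
    Finset.card_univ, Fintype.card_fin, ENNReal.ofReal_pow (sub_nonneg.2 hq)]

lemma tendsto_model_coord_zero_le_neg {p : ℕ → ℝ} (hp : ∀ m, p m ∈ Icc (0 : ℝ) 1) {δ : ℝ}
    (hδ : 0 < δ) :
    Tendsto (fun m => model m (p m) {ω | ω.1 0 ≤ -(δ * √(2 * Real.log m))}) atTop (𝓝 0) := by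
  simp_rw [model_coord_zero_le (hp _).1 (hp _).2, ← ofReal_cdf]
  simpa using ENNReal.tendsto_ofReal ((tendsto_cdf_atBot _).comp
    (tendsto_neg_atTop_atBot.comp (tendsto_sqrt_two_mul_log_natCast_atTop.const_mul_atTop hδ)))

lemma tendsto_model_no_strong_signal {p : ℕ → ℝ} (hp : ∀ m, p m ∈ Icc (0 : ℝ) 1) {π : ℝ}
    (hπ : 0 < π) (hlim : Tendsto p atTop (𝓝 π)) {a : ℝ} (ha0 : 0 ≤ a) (ha1 : a < 1) :
    Tendsto (fun m => model m (p m) {ω | ∀ j, ¬(a * √(2 * Real.log m) ≤ ω.1 j.succ ∧ ω.2 j = 1)})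
      atTop (𝓝 0) := by
  simp_rw [model_no_strong_signal (hp _).1 (hp _).2]
  refine ENNReal.ofReal_zero ▸ ENNReal.tendsto_ofReal
    (tendsto_one_sub_pow_of_tendsto_mul_atTop
      (fun m => mul_le_one₀ measureReal_le_one (hp m).1 (hp m).2) ?_)
  refine (hlim.pos_mul_atTop hπ (tendsto_natCast_mul_gaussianReal_real_Ici ha0 ha1)).congr
    fun m => ?_
  ring

end Model

section

open Set Topology

lemma tendsto_measure_one_of_compl_subset {ι : Type*} {l : Filter ι} {Ω : ι → Type*}
    [∀ i, MeasurableSpace (Ω i)] {μ : ∀ i, Measure (Ω i)} [∀ i, IsProbabilityMeasure (μ i)]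
    {E B : ∀ i, Set (Ω i)} (hBE : ∀ᶠ i in l, (B i)ᶜ ⊆ E i)
    (hB : Tendsto (fun i => μ i (B i)) l (𝓝 0)) :
    Tendsto (fun i => μ i (E i)) l (𝓝 1) := by
  have hlow : Tendsto (fun i => 1 - μ i (B i)) l (𝓝 1) := by
    simpa using ENNReal.Tendsto.sub tendsto_const_nhds hB (Or.inl ENNReal.one_ne_top)
  refine tendsto_of_tendsto_of_tendsto_of_le_of_le' hlow tendsto_const_nhds ?_
    (Eventually.of_forall fun i => prob_le_one)
  filter_upwards [hBE] with i hi
  rw [tsub_le_iff_right, add_comm]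
  calc 1 = μ i (B i ∪ (B i)ᶜ) := by rw [union_compl_self, measure_univ]
    _ ≤ μ i (B i) + μ i (B i)ᶜ := measure_union_le _ _
    _ ≤ μ i (B i) + μ i (E i) := by gcongr

lemma exists_lt_one_one_lt_add_mul {u v : ℝ} (hu : u ≤ 1) (h : 1 < v + u) :
    ∃ a, 0 ≤ a ∧ a < 1 ∧ 1 < v + a * u := by
  rcases le_or_gt u 0 with hu0 | hu0
  · exact ⟨0, le_rfl, one_pos, by linarith⟩
  · refine ⟨max 0 (1 - (v + u - 1) / 2), le_max_left _ _, max_lt one_pos (by linarith), ?_⟩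
    nlinarith [le_max_right 0 (1 - (v + u - 1) / 2)]

lemma pval_le_Phi_of_strong_signal {m : ℕ} {ρ c a δ : ℝ} (hρ : ρ ≤ 1) (hδ : 0 ≤ δ)
    (hsplit : √c + a * √(1 - ρ) = 1 + 2 * δ) {ω : (Fin (m + 1) → ℝ) × (Fin m → ℝ)} {j : Fin m}
    (h0 : -(δ * √(2 * Real.log m)) < ω.1 0) (hj : a * √(2 * Real.log m) ≤ ω.1 j.succ)
    (hb : ω.2 j = 1) :
    pval m (√(2 * c * Real.log m)) ρ ω j ≤ Phi (-((1 + δ) * √(2 * Real.log m))) := by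
  set s := √(2 * Real.log m)
  have hs : 0 ≤ s := Real.sqrt_nonneg _
  have hμ : √(2 * c * Real.log m) = √c * s := by
    rw [mul_comm 2 c, mul_assoc, Real.sqrt_mul' _ (by positivity)]
  have hZ₀ : -(√ρ * ω.1 0) ≤ δ * s := by
    nlinarith [Real.sqrt_le_one.2 hρ, Real.sqrt_nonneg ρ, mul_nonneg hδ hs]
  have hZ : √(1 - ρ) * (a * s) ≤ √(1 - ρ) * ω.1 j.succ :=
    mul_le_mul_of_nonneg_left hj (Real.sqrt_nonneg _)
  apply Phi_mono
  rw [hb, mul_one, hμ]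
  linear_combination (-s) * hsplit + hZ₀ + hZ

lemma rpow_mean_pval_le_cal_of_strong_signal {r α ρ c a δ : ℝ} (hr : r < 0) (hα : 0 < α)
    (hρ : ρ ≤ 1) (hδ : 0 ≤ δ) (hsplit : √c + a * √(1 - ρ) = 1 + 2 * δ) {m : ℕ}
    (hs : 1 ≤ √(2 * Real.log m)) (hcal : (m : ℝ) ^ (-(1 + δ) ^ 2) ≤ (m : ℝ) ^ (1 / r) * cal r α m)
    {ω : (Fin (m + 1) → ℝ) × (Fin m → ℝ)} {j : Fin m}
    (h0 : -(δ * √(2 * Real.log m)) < ω.1 0) (hj : a * √(2 * Real.log m) ≤ ω.1 j.succ)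
    (hb : ω.2 j = 1) :
    ((1 / m : ℝ) * ∑ i : Fin m, pval m (√(2 * c * Real.log m)) ρ ω i ^ r) ^ (1 / r)
      ≤ cal r α m := by
  have hpj : pval m (√(2 * c * Real.log m)) ρ ω j
      ≤ (Fintype.card (Fin m) : ℝ) ^ (1 / r) * cal r α m := by
    rw [Fintype.card_fin]
    calc pval m (√(2 * c * Real.log m)) ρ ω j ≤ Phi (-((1 + δ) * √(2 * Real.log m))) :=
          pval_le_Phi_of_strong_signal hρ hδ hsplit h0 hj hb
      _ ≤ (m : ℝ) ^ (-(1 + δ) ^ 2) :=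
          Phi_neg_mul_sqrt_two_log_le (Nat.cast_pos.2 j.pos) (by linarith) hs
      _ ≤ (m : ℝ) ^ (1 / r) * cal r α m := hcal
  simpa only [Fintype.card_fin] using rpow_mean_rpow_inv_le_of_le hr (cal_pos hα j.pos)
    (p := pval m _ ρ ω) (fun i => Phi_pos _) hpj

end

theorem stmt_16_general (r ρ α c : ℝ) (hr : r ≤ -1) (hρ : ρ ∈ Set.Icc (0:ℝ) 1) (hα : 0 < α)
    (hdet : 1 - Real.sqrt (1 - ρ) < Real.sqrt c)
    (πm : ℕ → ℝ) (hπm : ∀ m, πm m ∈ Set.Icc (0:ℝ) 1)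
    (π : ℝ) (hπ : π ∈ Set.Ioc (0:ℝ) 1) (hπlim : Tendsto πm atTop (nhds π)) :
    Tendsto (fun m : ℕ =>
        model m (πm m) {ω | ((1 / m : ℝ) * ∑ i : Fin m,
            pval m (Real.sqrt (2 * c * Real.log m)) ρ ω i ^ r) ^ (1 / r) ≤ cal r α m})
      atTop (nhds (1 : ENNReal)) := by
  have := fun m => isProbabilityMeasure_model m (hπm m).1 (hπm m).2
  obtain ⟨a, ha0, ha1, ha⟩ :=
    exists_lt_one_one_lt_add_mul (u := √(1 - ρ)) (v := √c)
      (Real.sqrt_le_one.2 (by linarith [hρ.1])) (by linarith)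
  obtain ⟨δ, hδ, hsplit⟩ : ∃ δ, 0 < δ ∧ √c + a * √(1 - ρ) = 1 + 2 * δ :=
    ⟨(√c + a * √(1 - ρ) - 1) / 2, by linarith, by ring⟩
  have hbad := (tendsto_model_coord_zero_le_neg hπm hδ).add
    (tendsto_model_no_strong_signal hπm hπ.1 hπlim ha0 ha1)
  rw [add_zero] at hbad
  refine tendsto_measure_one_of_compl_subset ?_ (tendsto_of_tendsto_of_tendsto_of_le_of_le
    tendsto_const_nhds hbad (fun _ => zero_le) (fun _ => measure_union_le _ _))
  filter_upwards [eventually_rpow_neg_le_rpow_inv_mul_cal hr hα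
      (show 1 < (1 + δ) ^ 2 by nlinarith),
    tendsto_sqrt_two_mul_log_natCast_atTop.eventually_ge_atTop 1] with m hcal hs ω hω
  simp only [Set.mem_compl_iff, Set.mem_union, Set.mem_ofPred_eq, not_or, not_le, not_forall,
    not_not] at hω
  obtain ⟨h0, j, hj, hb⟩ := hω
  exact rpow_mean_pval_le_cal_of_strong_signal (by linarith) hα hρ.2 hδ.le hsplit hs hcal h0 hj hb

/-- for `r ≤ -1`, `ρ ∈ [0,1]`, strong signals `μ_m = √(2c log m)` with
`√c > 1 - √(1-ρ)`, and proportion `π_m → π ∈ (0,1]`, the asymptotic power of the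
calibrated generalized-mean test is one: `Pr(((1/m)Σ p_{mi}^r)^{1/r} ≤ c_m) → 1`. -/
theorem stmt_16 (r ρ α c : ℝ) (hr : r ≤ -1) (hρ : ρ ∈ Set.Icc (0:ℝ) 1) (hα : 0 < α)
    (hc : 0 < c) (hdet : 1 - Real.sqrt (1 - ρ) < Real.sqrt c)
    (πm : ℕ → ℝ) (hπm : ∀ m, πm m ∈ Set.Icc (0:ℝ) 1)
    (π : ℝ) (hπ : π ∈ Set.Ioc (0:ℝ) 1) (hπlim : Tendsto πm atTop (nhds π)) :
    Tendsto (fun m : ℕ =>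
        model m (πm m) {ω | ((1 / m : ℝ) * ∑ i : Fin m,
            pval m (Real.sqrt (2 * c * Real.log m)) ρ ω i ^ r) ^ (1 / r) ≤ cal r α m})
      atTop (nhds (1 : ENNReal)) :=
  stmt_16_general r ρ α c hr hρ hα hdet πm hπm π hπ hπlim
end

section
/- Let m ≥ 1, p_1,…,p_m ∈ [0,1] and α ∈ [0,1]. For every nonempty S ⊆ [m] define the Bonferroni local test t(S) = 1{ |S| · min_{i∈S} p_i ≤ α } and the closed-testing indicator t̄(S) = 1 iff t(J) = 1 for every J with S ⊆ J ⊆ [m]. Then the procedure is consonant: for every nonempty S ⊆ [m], if t̄(S) = 1 then there exists i ∈ S with t̄({i}) = 1. -/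
/-! Let `i` minimise `p` on `S`. Any `K ∋ i` sits inside `J = S ∪ K`, which contains `S` and
has the same minimum p-value as `K` but at least as many elements, so
`|K| · min_K p ≤ |J| · min_J p ≤ α`. -/

theorem Finset.sInf_image_union_eq_of_le {ι β : Type*} [DecidableEq ι]
    [ConditionallyCompleteLinearOrder β] (f : ι → β) {S K : Finset ι} {i : ι} (hiK : i ∈ K) (hmin : ∀ j ∈ S, f i ≤ f j) :
    sInf (f '' ↑(S ∪ K)) = sInf (f '' ↑K) := by
  have hbK : BddBelow (f '' ↑K) := (K.finite_toSet.image f).bddBelow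
  have hKne : (f '' ↑K).Nonempty := ⟨f i, i, hiK, rfl⟩
  rw [Finset.coe_union, Set.image_union]
  refine le_antisymm (csInf_le_csInf (((S.finite_toSet.image f).bddBelow).union hbK)
    hKne Set.subset_union_right) (le_csInf (hKne.mono Set.subset_union_right) ?_)
  rintro _ (⟨j, hjS, rfl⟩ | ⟨j, hjK, rfl⟩)
  · exact (csInf_le hbK ⟨i, hiK, rfl⟩).trans (hmin j hjS)
  · exact csInf_le hbK ⟨j, hjK, rfl⟩

theorem Finset.card_mul_sInf_image_le_union {ι : Type*} [DecidableEq ι] (p : ι → ℝ)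
    (hp : ∀ i, 0 ≤ p i) {S K : Finset ι} {i : ι} (hiK : i ∈ K) (hmin : ∀ j ∈ S, p i ≤ p j) :
    (K.card : ℝ) * sInf (p '' ↑K) ≤ ((S ∪ K).card : ℝ) * sInf (p '' ↑(S ∪ K)) := by
  rw [Finset.sInf_image_union_eq_of_le p hiK hmin]
  refine mul_le_mul_of_nonneg_right ?_ (Real.sInf_nonneg ?_)
  · exact_mod_cast Finset.card_le_card Finset.subset_union_right
  · rintro _ ⟨j, -, rfl⟩
    exact hp j

theorem stmt_18_general (m : ℕ) (p : Fin m → ℝ)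
    (hp : ∀ i, p i ∈ Set.Icc (0:ℝ) 1) (α : ℝ)
    (S : Finset (Fin m)) (hS : S.Nonempty)
    (hrej : ∀ J : Finset (Fin m), S ⊆ J → (J.card : ℝ) * sInf (p '' ↑J) ≤ α) :
    ∃ i ∈ S, ∀ K : Finset (Fin m), ({i} : Finset (Fin m)) ⊆ K →
      (K.card : ℝ) * sInf (p '' ↑K) ≤ α := by
  obtain ⟨i, hiS, hmin⟩ := S.exists_min_image p hS
  refine ⟨i, hiS, fun K hK => ?_⟩
  calc (K.card : ℝ) * sInf (p '' ↑K)
      ≤ ((S ∪ K).card : ℝ) * sInf (p '' ↑(S ∪ K)) :=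
        Finset.card_mul_sInf_image_le_union p (fun j => (hp j).1)
          (Finset.singleton_subset_iff.mp hK) hmin
    _ ≤ α := hrej _ Finset.subset_union_left

/-- closed testing with the Bonferroni local test
`t(S) = 1{|S|·min_{i∈S} p_i ≤ α}` is consonant: whenever closed testing rejects a
nonempty `S`, it also rejects some singleton `{i}` with `i ∈ S`. -/
theorem stmt_18 (m : ℕ) (hm : 1 ≤ m) (p : Fin m → ℝ)
    (hp : ∀ i, p i ∈ Set.Icc (0:ℝ) 1) (α : ℝ) (hα : α ∈ Set.Icc (0:ℝ) 1)
    (S : Finset (Fin m)) (hS : S.Nonempty)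
    (hrej : ∀ J : Finset (Fin m), S ⊆ J → (J.card : ℝ) * sInf (p '' ↑J) ≤ α) :
    ∃ i ∈ S, ∀ K : Finset (Fin m), ({i} : Finset (Fin m)) ⊆ K →
      (K.card : ℝ) * sInf (p '' ↑K) ≤ α :=
  stmt_18_general m p hp α S hS hrej
end

section
/- For every r ∈ (0, ∞) and every α ∈ (0,1), there exist p-values p_1, p_2, p_3 ∈ (0,1] such that, defining for every nonempty S ⊆ {1,2,3} the local test t(S) = 1{ Σ_{i∈S} p_i^r ≤ |S| · α^r / (2(r+1)) } and the closed-testing indicator t̄(S) = 1 iff t(J) = 1 for every J with S ⊆ J ⊆ {1,2,3}, one has t̄({1,2}) = 1 but t̄({1}) = 0 and t̄({2}) = 0. Hence closed testing based on the generalized-mean local test with exponent r ∈ (0,∞) is not consonant. -/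
/-- for every `r > 0` and `α ∈ (0,1)` there are p-values
`p₁, p₂, p₃ ∈ (0,1]` such that closed testing with the generalized-mean local test
`t(S) = 1{Σ_{i∈S} p_i^r ≤ |S| α^r/(2(r+1))}` rejects `{1,2}` but rejects neither
`{1}` nor `{2}`; hence this closed testing procedure is not consonant. -/
theorem stmt_19 (r : ℝ) (hr : 0 < r) (α : ℝ) (hα : α ∈ Set.Ioo (0:ℝ) 1) :
    ∃ p : Fin 3 → ℝ, (∀ i, p i ∈ Set.Ioc (0:ℝ) 1) ∧
      (∀ J : Finset (Fin 3), ({0, 1} : Finset (Fin 3)) ⊆ J →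
        ∑ i ∈ J, p i ^ r ≤ (J.card : ℝ) * α ^ r / (2 * (r + 1))) ∧
      ¬ (∀ J : Finset (Fin 3), ({0} : Finset (Fin 3)) ⊆ J →
        ∑ i ∈ J, p i ^ r ≤ (J.card : ℝ) * α ^ r / (2 * (r + 1))) ∧
      ¬ (∀ J : Finset (Fin 3), ({1} : Finset (Fin 3)) ⊆ J →
        ∑ i ∈ J, p i ^ r ≤ (J.card : ℝ) * α ^ r / (2 * (r + 1))) := by
  obtain ⟨hα0, hα1⟩ := hα
  set c : ℝ := α ^ r / (2 * (r + 1)) with hc_def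
  have hr1 : (0:ℝ) < r + 1 := by linarith
  have hαr : 0 < α ^ r := Real.rpow_pos_of_pos hα0 r
  have hαr1 : α ^ r ≤ 1 := le_of_lt (Real.rpow_lt_one (le_of_lt hα0) hα1 hr)
  have hc : 0 < c := by positivity
  have hc1 : 2 * c ≤ 1 := by
    have : c ≤ 1/2 := by
      rw [hc_def, div_le_div_iff₀ (by positivity) (by norm_num)]
      nlinarith
    linarith
  refine ⟨fun i => if i = 2 then (2*c) ^ r⁻¹ else (c/2) ^ r⁻¹, ?_, ?_, ?_, ?_⟩
  · intro i
    constructor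
    · dsimp only; split <;> exact Real.rpow_pos_of_pos (by linarith) _
    · dsimp only; split
      · exact Real.rpow_le_one (by linarith) hc1 (by positivity)
      · exact Real.rpow_le_one (by linarith) (by linarith) (by positivity)
  · intro J hJ
    have h0 : (0 : Fin 3) ∈ J := hJ (by simp)
    have h1 : (1 : Fin 3) ∈ J := hJ (by simp)
    have key0 : ((c/2) ^ r⁻¹ : ℝ) ^ r = c/2 :=
      Real.rpow_inv_rpow (by positivity) (ne_of_gt hr)
    have key2 : ((2*c) ^ r⁻¹ : ℝ) ^ r = 2*c :=
      Real.rpow_inv_rpow (by positivity) (ne_of_gt hr)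
    by_cases h2 : (2 : Fin 3) ∈ J
    · have hJeq : J = {0, 1, 2} := by
        ext a
        fin_cases a <;> simp [h0, h1, h2]
      subst hJeq
      simp only [Finset.sum_insert, Finset.mem_insert, Finset.mem_singleton]
      rw [show (({0,1,2} : Finset (Fin 3)).card : ℝ) = 3 by norm_num [show ({0,1,2} : Finset (Fin 3)).card = 3 from rfl]]
      rw [Finset.sum_insert (by decide), Finset.sum_insert (by decide),
        Finset.sum_singleton]
      simp only [show (0:Fin 3) ≠ 2 by decide, show (1:Fin 3) ≠ 2 by decide,
        if_false, if_true, reduceIte]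
      rw [key0, key2, show (3:ℝ) * α ^ r / (2 * (r + 1)) = 3 * c by rw [hc_def]; ring]
      linarith
    · have hJeq : J = {0, 1} := by
        ext a
        fin_cases a <;> simp [h0, h1, h2]
      subst hJeq
      rw [show (({0,1} : Finset (Fin 3)).card : ℝ) = 2 by norm_num [show ({0,1} : Finset (Fin 3)).card = 2 from rfl]]
      rw [Finset.sum_insert (by decide), Finset.sum_singleton]
      simp only [show (0:Fin 3) ≠ 2 by decide, show (1:Fin 3) ≠ 2 by decide,
        if_false, reduceIte]
      rw [key0, show (2:ℝ) * α ^ r / (2 * (r + 1)) = 2 * c by rw [hc_def]; ring]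
      linarith
  · intro h
    have := h {0, 2} (by decide)
    rw [Finset.sum_insert (by decide), Finset.sum_singleton] at this
    simp only [show (0:Fin 3) ≠ 2 by decide, if_false, reduceIte, if_true] at this
    rw [Real.rpow_inv_rpow (by positivity) (ne_of_gt hr),
      Real.rpow_inv_rpow (by positivity) (ne_of_gt hr)] at this
    rw [show (({0,2} : Finset (Fin 3)).card : ℝ) = 2 by norm_num [show ({0,2} : Finset (Fin 3)).card = 2 from rfl]] at this
    rw [show (2:ℝ) * α ^ r / (2 * (r + 1)) = 2 * c by rw [hc_def]; ring] at this
    linarith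
  · intro h
    have := h {1, 2} (by decide)
    rw [Finset.sum_insert (by decide), Finset.sum_singleton] at this
    simp only [show (1:Fin 3) ≠ 2 by decide, if_false, reduceIte, if_true] at this
    rw [Real.rpow_inv_rpow (by positivity) (ne_of_gt hr),
      Real.rpow_inv_rpow (by positivity) (ne_of_gt hr)] at this
    rw [show (({1,2} : Finset (Fin 3)).card : ℝ) = 2 by norm_num [show ({1,2} : Finset (Fin 3)).card = 2 from rfl]] at this
    rw [show (2:ℝ) * α ^ r / (2 * (r + 1)) = 2 * c by rw [hc_def]; ring] at this
    linarith
end
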